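/- arXiv:1510.02900 — 10 statements merged into one kernel-verified Lean document; each statement's English description precedes it below -/
import Mathlib

section
/- For all m, n ≥ 0 the complete Bell polynomials satisfy the identity Y_{m+n} = Σ_{l=1}^{m} (∂Y_m/∂v_l)·D^l(Y_n) + Y_m·Y_n, where D^l is the l-th iterate of the derivation D. -/
/-!
Adding a new point `a` to a set partition either creates the block `{a}` or enlarges a block `β`
to `insert a β`, which replaces the factor `v_{|β|}` by `v_{|β|+1}`. Summing over partitions
gives `Y_{n+1} = (D + v₁) Y_n`, hence `Y_{m+n} = (D + v₁)^m Y_n`. The identity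
`(D + v₁)^m q = Σ_{l=1}^m ∂Y_m/∂v_l · D^l q + Y_m q` then follows by induction on `m` from the
commutation rule `⁅∂/∂v_{l+1}, D⁆ = ∂/∂v_l`.
-/

open Finset MvPolynomial

/-- The polynomial ring `ℚ[v₁, v₂, …]`; the variable `X l` represents `v_l`. -/
abbrev BellRing : Type := MvPolynomial ℕ ℚ

/-- The complete exponential Bell polynomial
`Y_n = Σ_{π ⊢ [n]} ∏_{β ∈ π} v_{|β|}`. -/
noncomputable def bellY (n : ℕ) : BellRing :=
  ∑ π : Finpartition (Finset.univ : Finset (Fin n)), ∏ β ∈ π.parts, X β.card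

lemma Derivation.leibniz_prod {ι R A M : Type*} [CommSemiring R] [CommSemiring A] [Algebra R A]
    [AddCommMonoid M] [Module A M] [Module R M] [DecidableEq ι] (D : Derivation R A M)
    (t : Finset ι) (f : ι → A) :
    D (∏ i ∈ t, f i) = ∑ i ∈ t, (∏ j ∈ t.erase i, f j) • D (f i) := by
  induction t using Finset.induction_on with
  | empty => simp
  | insert a t ha ih =>
    rw [prod_insert ha, D.leibniz, ih, sum_insert ha, erase_insert ha, smul_sum, add_comm]
    congr 1
    refine sum_congr rfl fun i hi => ?_
    rw [erase_insert_of_ne (ne_of_mem_of_not_mem hi ha).symm,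
      prod_insert fun h => ha (mem_of_mem_erase h), smul_smul]

namespace Finpartition

variable {α : Type*} [DecidableEq α] {s : Finset α} {a : α}

def eraseElem (σ : Finpartition (insert a s)) (ha : a ∉ s) : Finpartition s :=
  (σ.avoid {a}).copy (by rw [sdiff_singleton_eq_erase, erase_insert ha])

lemma mem_eraseElem {σ : Finpartition (insert a s)} {ha : a ∉ s} {c : Finset α} :
    c ∈ (σ.eraseElem ha).parts ↔ ∃ d ∈ σ.parts, ¬d ⊆ {a} ∧ d.erase a = c := by
  simp [eraseElem, ← sdiff_singleton_eq_erase]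

lemma erase_parts_eraseElem (σ : Finpartition (insert a s)) (ha : a ∉ s) :
    (σ.eraseElem ha).parts.erase ((σ.part a).erase a) = σ.parts.erase (σ.part a) := by
  have hpart : σ.part a ∈ σ.parts := σ.part_mem.2 (mem_insert_self a s)
  have hmem : a ∈ σ.part a := σ.mem_part_self.2 (mem_insert_self a s)
  have key : ∀ d ∈ σ.parts, d ≠ σ.part a → a ∉ d := fun d hd hne had =>
    hne (σ.eq_of_mem_parts hd hpart had hmem)
  ext c
  simp only [mem_erase, mem_eraseElem]
  constructor
  · rintro ⟨hne, d, hd, -, rfl⟩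
    have hda : d ≠ σ.part a := by rintro rfl; exact hne rfl
    rw [erase_eq_of_notMem (key d hd hda)]
    exact ⟨hda, hd⟩
  · rintro ⟨hne, hc⟩
    have hac := key c hc hne
    refine ⟨fun h => ?_, c, hc, fun hsub => ?_, erase_eq_of_notMem hac⟩
    · exact σ.ne_empty hc (eq_empty_of_forall_notMem fun x hx =>
        (σ.disjoint hc hpart hne).notMem_of_mem_left_finset hx (mem_of_mem_erase (h ▸ hx)))
    · obtain ⟨x, hx⟩ := σ.nonempty_of_mem_parts hc
      exact hac (mem_singleton.1 (hsub hx) ▸ hx)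

/-- `b = ∅` stands for a new singleton part `{a}`. -/
def addToPart (π : Finpartition s) (ha : a ∉ s) (b : Finset α)
    (hb : b ∈ insert ∅ π.parts) : Finpartition (insert a s) where
  parts := insert (insert a b) (π.parts.erase b)
  supIndep := by
    rw [supIndep_iff_pairwiseDisjoint, coe_insert]
    refine (π.disjoint.subset (by simp)).insert fun c hc _ => ?_
    rw [mem_coe, mem_erase] at hc
    refine disjoint_insert_left.2 ⟨fun h => ha (π.le hc.2 h), ?_⟩
    rcases mem_insert.1 hb with rfl | hb
    · exact disjoint_empty_left c
    · exact π.disjoint hb hc.2 (Ne.symm hc.1)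
  sup_parts := by
    rw [sup_insert]
    rcases mem_insert.1 hb with rfl | hb
    · rw [erase_eq_of_notMem π.empty_notMem_parts, π.sup_parts]
      rfl
    · conv_rhs => rw [← π.sup_parts, ← insert_erase hb, sup_insert]
      exact insert_union a b _
  bot_notMem := by
    simp only [bot_eq_empty, mem_insert, mem_erase, not_or, not_and]
    exact ⟨(insert_ne_empty a b).symm, fun _ h => π.bot_notMem h⟩

lemma erase_part_mem_eraseElem (σ : Finpartition (insert a s)) (ha : a ∉ s) :
    (σ.part a).erase a ∈ insert ∅ (σ.eraseElem ha).parts := by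
  rw [mem_insert, or_iff_not_imp_left, mem_eraseElem]
  refine fun hne => ⟨σ.part a, σ.part_mem.2 (mem_insert_self a s), fun hsub => hne ?_, rfl⟩
  exact subset_empty.1 ((erase_subset_erase a hsub).trans (erase_singleton a).subset)

lemma part_addToPart (π : Finpartition s) (ha : a ∉ s) (b : Finset α)
    (hb : b ∈ insert ∅ π.parts) : (π.addToPart ha b hb).part a = insert a b :=
  part_eq_of_mem _ (mem_insert_self _ _) (mem_insert_self a b)

lemma subset_of_mem_insert_empty {π : Finpartition s} {b : Finset α}
    (hb : b ∈ insert ∅ π.parts) : b ⊆ s := by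
  rcases mem_insert.1 hb with rfl | hb
  exacts [empty_subset s, π.le hb]

lemma eraseElem_addToPart (π : Finpartition s) (ha : a ∉ s) (b : Finset α)
    (hb : b ∈ insert ∅ π.parts) : (π.addToPart ha b hb).eraseElem ha = π := by
  have hab : a ∉ b := fun h => ha (subset_of_mem_insert_empty hb h)
  have hpart : ((π.addToPart ha b hb).part a).erase a = b := by
    rw [part_addToPart, erase_insert hab]
  have hparts := erase_parts_eraseElem (π.addToPart ha b hb) ha
  have hmem := erase_part_mem_eraseElem (π.addToPart ha b hb) ha
  rw [hpart] at hparts hmem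
  rw [part_addToPart] at hparts
  change _ = (insert (insert a b) (π.parts.erase b)).erase (insert a b) at hparts
  rw [erase_insert (fun h => ha (π.le (mem_of_mem_erase h) (mem_insert_self a b)))] at hparts
  ext1
  rcases mem_insert.1 hb with rfl | hb
  · rwa [erase_eq_of_notMem π.empty_notMem_parts, erase_eq_of_notMem (empty_notMem_parts _)]
      at hparts
  · exact erase_injOn' b ((mem_insert.1 hmem).resolve_left (π.ne_empty hb)) hb hparts

lemma addToPart_eraseElem (σ : Finpartition (insert a s)) (ha : a ∉ s) :
    (σ.eraseElem ha).addToPart ha ((σ.part a).erase a) (σ.erase_part_mem_eraseElem ha) = σ := by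
  ext1
  change insert _ (_ : Finset (Finset α)) = _
  rw [erase_parts_eraseElem, insert_erase (σ.mem_part_self.2 (mem_insert_self a s)),
    insert_erase (σ.part_mem.2 (mem_insert_self a s))]

end Finpartition

section ShiftDerivation

variable (R : Type*) [CommSemiring R]

/-- It also sends `v₀` to `v₁`, so that `⁅∂/∂v_{l+1}, shiftDerivation⁆ = ∂/∂v_l` holds on the
whole ring and not only on polynomials in `v₁, v₂, …`. -/
noncomputable def shiftDerivation : Derivation R (MvPolynomial ℕ R) (MvPolynomial ℕ R) :=
  mkDerivation R fun l => X (l + 1)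

@[simp]
lemma shiftDerivation_X (l : ℕ) : shiftDerivation R (X l) = X (l + 1) :=
  mkDerivation_X _ _ _

variable {R}

lemma shiftDerivation_mem_supported {s : Set ℕ} (hs : ∀ i ∈ s, i + 1 ∈ s)
    {p : MvPolynomial ℕ R} (hp : p ∈ supported R s) : shiftDerivation R p ∈ supported R s := by
  rw [supported_eq_adjoin_X] at hp ⊢
  induction hp using Algebra.adjoin_induction with
  | mem x hx =>
    obtain ⟨i, hi, rfl⟩ := hx
    exact shiftDerivation_X R i ▸ Algebra.subset_adjoin ⟨i + 1, hs i hi, rfl⟩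
  | algebraMap r => simp
  | add x y _ _ hx hy => exact map_add (shiftDerivation R) x y ▸ add_mem hx hy
  | mul x y hx' hy' hx hy =>
    rw [Derivation.leibniz, smul_eq_mul, smul_eq_mul]
    exact add_mem (mul_mem hx' hy) (mul_mem hy' hx)

lemma iterate_eq_iterate_shiftDerivation {s : Set ℕ} (hs : ∀ i ∈ s, i + 1 ∈ s)
    {D : Derivation R (MvPolynomial ℕ R) (MvPolynomial ℕ R)}
    (hD : ∀ i ∈ s, D (X i) = X (i + 1))
    (k : ℕ) {p : MvPolynomial ℕ R} (hp : p ∈ supported R s) :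
    (⇑D)^[k] p = (shiftDerivation R)^[k] p := by
  induction k generalizing p with
  | zero => rfl
  | succ k ih =>
    have hDp : D p = shiftDerivation R p :=
      derivation_eqOn_supported (fun i hi => by simp [hD i hi]) hp
    rw [Function.iterate_succ_apply, Function.iterate_succ_apply, hDp,
      ih (shiftDerivation_mem_supported hs hp)]

noncomputable def bellStep (p : MvPolynomial ℕ R) : MvPolynomial ℕ R :=
  shiftDerivation R p + X 1 * p

variable (R) in
/-- The Fréchet derivative `p_* q = Σ_{l=1}^{m} ∂p/∂v_l · D^l q`, truncated at order `m`. -/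
noncomputable def frechetDeriv (m : ℕ) (p q : MvPolynomial ℕ R) : MvPolynomial ℕ R :=
  ∑ l ∈ range m, pderiv (l + 1) p * (shiftDerivation R)^[l + 1] q

lemma frechetDeriv_eq_sum_Icc (m : ℕ) (p q : MvPolynomial ℕ R) :
    frechetDeriv R m p q = ∑ l ∈ Icc 1 m, pderiv l p * (shiftDerivation R)^[l] q := by
  rw [frechetDeriv, range_eq_Ico,
    sum_Ico_add' (fun l => pderiv l p * (shiftDerivation R)^[l] q)]
  rfl

lemma shiftDerivation_frechetDeriv (m : ℕ) (p q : MvPolynomial ℕ R) :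
    shiftDerivation R (frechetDeriv R m p q) =
      ∑ l ∈ range m, shiftDerivation R (pderiv (l + 1) p) * (shiftDerivation R)^[l + 1] q +
        ∑ l ∈ range m, pderiv (l + 1) p * (shiftDerivation R)^[l + 2] q := by
  simp only [frechetDeriv, map_sum, Derivation.leibniz, smul_eq_mul, sum_add_distrib,
    Function.iterate_succ_apply']
  rw [add_comm]
  exact congrArg (· + _) (sum_congr rfl fun _ _ => mul_comm _ _)

variable {α : Type*} [DecidableEq α]

variable (R) in
noncomputable def partitionSum (s : Finset α) : MvPolynomial ℕ R :=
  ∑ π : Finpartition s, ∏ β ∈ π.parts, X #β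

lemma partitionSum_empty : partitionSum R (∅ : Finset α) = 1 := by
  have : Unique (Finpartition (∅ : Finset α)) := inferInstanceAs (Unique (Finpartition ⊥))
  simp [partitionSum, Finpartition.parts_eq_empty_iff.2 rfl]

lemma partitionSum_insert {s : Finset α} {a : α} (ha : a ∉ s) :
    partitionSum R (insert a s) = bellStep (partitionSum R s) := by
  have hweight (π : Finpartition s) :
      ∑ b ∈ insert ∅ π.parts, X (#b + 1) * ∏ β ∈ π.parts.erase b, (X #β : MvPolynomial ℕ R) =
        bellStep (∏ β ∈ π.parts, X #β) := by
    rw [sum_insert π.empty_notMem_parts, erase_eq_of_notMem π.empty_notMem_parts, bellStep,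
      Derivation.leibniz_prod, add_comm]
    simp [mul_comm]
  calc partitionSum R (insert a s)
      = ∑ p ∈ univ.sigma fun π : Finpartition s => insert ∅ π.parts,
          X (#p.2 + 1) * ∏ β ∈ p.1.parts.erase p.2, X #β := by
        refine sum_bij' (fun σ _ => ⟨σ.eraseElem ha, (σ.part a).erase a⟩)
          (fun p hp => p.1.addToPart ha p.2 (mem_sigma.1 hp).2)
          (fun σ _ => mem_sigma.2 ⟨mem_univ _, σ.erase_part_mem_eraseElem ha⟩)
          (fun _ _ => mem_univ _)
          (fun σ _ => σ.addToPart_eraseElem ha) (fun p hp => ?_) (fun σ _ => ?_)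
        · obtain ⟨π, b⟩ := p
          have hb := (mem_sigma.1 hp).2
          have hab : a ∉ b := fun h => ha (Finpartition.subset_of_mem_insert_empty hb h)
          exact Sigma.ext (π.eraseElem_addToPart ha b hb)
            (heq_of_eq (by rw [Finpartition.part_addToPart, erase_insert hab]))
        · have hmem : a ∈ σ.part a := σ.mem_part_self.2 (mem_insert_self a s)
          rw [σ.erase_parts_eraseElem ha, card_erase_add_one hmem]
          exact (mul_prod_erase _ (fun β => (X #β : MvPolynomial ℕ R))
            (σ.part_mem.2 (mem_insert_self a s))).symm
    _ = ∑ π : Finpartition s, bellStep (∏ β ∈ π.parts, X #β) := by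
        rw [sum_sigma]
        exact sum_congr rfl fun π _ => hweight π
    _ = bellStep (partitionSum R s) := by
        simp only [bellStep, partitionSum, map_sum, mul_sum, sum_add_distrib]

lemma partitionSum_eq_iterate_bellStep (s : Finset α) : partitionSum R s = bellStep^[#s] 1 := by
  induction s using Finset.induction_on with
  | empty => exact partitionSum_empty
  | insert a s ha ih =>
    rw [partitionSum_insert ha, ih, card_insert_of_notMem ha, Function.iterate_succ_apply']

end ShiftDerivation

section Commutator

variable {R : Type*} [CommRing R]

lemma lie_pderiv_succ_shiftDerivation (l : ℕ) :
    ⁅(pderiv (l + 1) : Derivation R (MvPolynomial ℕ R) _), shiftDerivation R⁆ = pderiv l := by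
  ext i : 1
  classical
  simp [Derivation.commutator_apply, pderiv_X, Pi.single_apply, apply_ite (shiftDerivation R)]

lemma pderiv_succ_shiftDerivation (l : ℕ) (p : MvPolynomial ℕ R) :
    pderiv (l + 1) (shiftDerivation R p) = shiftDerivation R (pderiv (l + 1) p) + pderiv l p := by
  rw [← lie_pderiv_succ_shiftDerivation l, Derivation.commutator_apply, add_sub_cancel]

lemma pderiv_succ_bellStep (l : ℕ) (p : MvPolynomial ℕ R) :
    pderiv (l + 1) (bellStep p) = shiftDerivation R (pderiv (l + 1) p) + pderiv l p +
      pderiv (l + 1) (X 1) * p + X 1 * pderiv (l + 1) p := by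
  rw [bellStep, map_add, pderiv_succ_shiftDerivation, Derivation.leibniz, smul_eq_mul,
    smul_eq_mul]
  ring

lemma bellStep_frechetDeriv_add_mul {m : ℕ} {p : MvPolynomial ℕ R} (h0 : pderiv 0 p = 0)
    (hm : pderiv (m + 1) p = 0) (q : MvPolynomial ℕ R) :
    bellStep (frechetDeriv R m p q + p * q) =
      frechetDeriv R (m + 1) (bellStep p) q + bellStep p * q := by
  have hA :
      ∑ l ∈ range (m + 1), shiftDerivation R (pderiv (l + 1) p) * (shiftDerivation R)^[l + 1] q =
      ∑ l ∈ range m, shiftDerivation R (pderiv (l + 1) p) * (shiftDerivation R)^[l + 1] q := by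
    rw [sum_range_succ, hm, map_zero, zero_mul, add_zero]
  have hB : ∑ l ∈ range (m + 1), pderiv l p * (shiftDerivation R)^[l + 1] q =
      ∑ l ∈ range m, pderiv (l + 1) p * (shiftDerivation R)^[l + 2] q := by
    rw [sum_range_succ', h0, zero_mul, add_zero]
  have hC : ∑ l ∈ range (m + 1), pderiv (l + 1) (X 1) * p * (shiftDerivation R)^[l + 1] q =
      p * shiftDerivation R q := by
    rw [sum_range_succ', sum_eq_zero fun l _ => by rw [pderiv_X_of_ne (by omega)]; ring]
    simp
  have hE : ∑ l ∈ range (m + 1), X 1 * pderiv (l + 1) p * (shiftDerivation R)^[l + 1] q =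
      X 1 * frechetDeriv R m p q := by
    rw [sum_range_succ, hm, frechetDeriv, mul_sum]
    simp [mul_assoc]
  have hexpand : frechetDeriv R (m + 1) (bellStep p) q =
      ∑ l ∈ range (m + 1), shiftDerivation R (pderiv (l + 1) p) * (shiftDerivation R)^[l + 1] q +
        ∑ l ∈ range (m + 1), pderiv l p * (shiftDerivation R)^[l + 1] q +
        ∑ l ∈ range (m + 1), pderiv (l + 1) (X 1) * p * (shiftDerivation R)^[l + 1] q +
        ∑ l ∈ range (m + 1), X 1 * pderiv (l + 1) p * (shiftDerivation R)^[l + 1] q := by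
    simp only [frechetDeriv, pderiv_succ_bellStep, add_mul, sum_add_distrib]
  rw [hexpand, hA, hB, hC, hE, bellStep, bellStep, map_add, shiftDerivation_frechetDeriv, Derivation.leibniz,
    smul_eq_mul, smul_eq_mul]
  ring

end Commutator

lemma bellY_eq_iterate_bellStep (n : ℕ) : bellY n = bellStep^[n] 1 := by
  rw [bellY, ← partitionSum, partitionSum_eq_iterate_bellStep, card_univ, Fintype.card_fin]

lemma bellY_mem_supported (n : ℕ) : bellY n ∈ supported ℚ (Set.Icc 1 n) := by
  refine Subalgebra.sum_mem _ fun π _ => Subalgebra.prod_mem _ fun β hβ => ?_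
  refine Algebra.subset_adjoin ⟨#β, ⟨(π.nonempty_of_mem_parts hβ).card_pos, ?_⟩, rfl⟩
  simpa using card_le_univ β

lemma pderiv_bellY_of_notMem {l n : ℕ} (hl : l ∉ Set.Icc 1 n) : pderiv l (bellY n) = 0 :=
  pderiv_eq_zero_of_notMem_vars fun h => hl (mem_supported.1 (bellY_mem_supported n) h)

lemma iterate_bellStep_eq_frechetDeriv_add_mul (m : ℕ) (q : BellRing) :
    bellStep^[m] q = frechetDeriv ℚ m (bellY m) q + bellY m * q := by
  induction m with
  | zero => simp [frechetDeriv, bellY_eq_iterate_bellStep]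
  | succ m ih =>
    rw [Function.iterate_succ_apply', ih, bellStep_frechetDeriv_add_mul
      (pderiv_bellY_of_notMem (by simp)) (pderiv_bellY_of_notMem (by simp)),
      bellY_eq_iterate_bellStep (m + 1), Function.iterate_succ_apply',
      ← bellY_eq_iterate_bellStep]

/-- For all `m, n ≥ 0`,
`Y_{m+n} = Σ_{l=1}^{m} (∂Y_m/∂v_l)·D^l(Y_n) + Y_m·Y_n`,
where `D` is the derivation with `D(v_l) = v_{l+1}` (`l ≥ 1`) and `D^l` its `l`-th
iterate.  (Since `Y_m` involves only `v_1, …, v_m`, the sum over `1 ≤ l ≤ m` is the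
full Fréchet derivative `(Y_m)_*` applied to `Y_n`.) -/
theorem bellY_freschet_identity (D : Derivation ℚ BellRing BellRing)
    (hD : ∀ l : ℕ, 1 ≤ l → D (X l) = X (l + 1)) (m n : ℕ) :
    bellY (m + n) =
      (∑ l ∈ Finset.Icc 1 m, pderiv l (bellY m) * (⇑D)^[l] (bellY n)) +
        bellY m * bellY n := by
  have hDn (l : ℕ) : (⇑D)^[l] (bellY n) = (shiftDerivation ℚ)^[l] (bellY n) :=
    iterate_eq_iterate_shiftDerivation (s := Set.Ici 1) (fun _ => Nat.le_succ_of_le) hD l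
      (supported_mono Set.Icc_subset_Ici_self (bellY_mem_supported n))
  rw [bellY_eq_iterate_bellStep (m + n), Function.iterate_add_apply, ← bellY_eq_iterate_bellStep,
    iterate_bellStep_eq_frechetDeriv_add_mul, frechetDeriv_eq_sum_Icc]
  simp only [hDn]
end

section
/- Define h_n = Σ_{a ∈ T_n} ∏_{j=1}^{n} u_{|{i : a_i = j}|} ∈ R, with h_0 = 1. Then for every n ≥ 0, h_{n+1} = D(u_0 · h_n); equivalently, h_n = (D ∘ M_{u_0})^n(1), where M_{u_0} is multiplication by u_0. -/
open Finset MvPolynomial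

/-- The polynomial ring `ℚ[u₀, u₁, u₂, …]`; the variable `X l` represents `u_l`. -/
abbrev URing : Type := MvPolynomial ℕ ℚ

/-- A natural growth sequence of length `n` is `a = (a_1, …, a_n)` with `1 ≤ a_i ≤ i`;
it is encoded as `a : (i : Fin n) → Fin (i.val + 1)`, the `i`-th entry being
`(a i : ℕ) + 1 ∈ [1, i + 1]`.  The associated monomial is
`∏_{j=1}^{n} u_{|{i : a_i = j}|}`. -/
noncomputable def hPoly (n : ℕ) : URing :=
  ∑ a : (i : Fin n) → Fin (i.val + 1),
    ∏ j ∈ Finset.Icc 1 n,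
      X ((Finset.univ.filter fun i : Fin n => (a i : ℕ) + 1 = j).card)

/-- Leibniz rule for a derivation on a finite product. -/
lemma D_finset_prod {ι : Type*} [DecidableEq ι] (D : Derivation ℚ URing URing)
    (s : Finset ι) (f : ι → URing) :
    D (∏ i ∈ s, f i) = ∑ i ∈ s, D (f i) * ∏ j ∈ s.erase i, f j := by
  induction s using Finset.induction_on with
  | empty => simp
  | @insert a s ha ih =>
    rw [Finset.prod_insert ha, D.leibniz, smul_eq_mul, smul_eq_mul, ih,
      Finset.mul_sum, Finset.sum_insert ha, Finset.erase_insert ha]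
    have h2 : ∑ i ∈ s, D (f i) * ∏ j ∈ (insert a s).erase i, f j
        = ∑ i ∈ s, f a * (D (f i) * ∏ j ∈ s.erase i, f j) := by
      refine Finset.sum_congr rfl fun i hi => ?_
      have hne : i ≠ a := fun h => ha (h ▸ hi)
      rw [Finset.erase_insert_of_ne hne.symm,
        Finset.prod_insert (fun h => ha (Finset.mem_of_mem_erase h))]
      ring
    rw [h2]
    ring

lemma count_snoc (n : ℕ) (b : (i : Fin n) → Fin (i.val + 1)) (k : Fin (n + 1)) (j : ℕ) :
    (Finset.univ.filter fun i : Fin (n + 1) =>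
        ((Fin.snoc b k : ∀ i : Fin (n + 1), Fin (i.val + 1)) i : ℕ) + 1 = j).card
      = (Finset.univ.filter fun i : Fin n => (b i : ℕ) + 1 = j).card
        + (if (k : ℕ) + 1 = j then 1 else 0) := by
  rw [Finset.card_filter, Finset.card_filter, Fin.sum_univ_castSucc]
  simp [Fin.snoc_castSucc, Fin.snoc_last]

lemma count_top (n : ℕ) (b : (i : Fin n) → Fin (i.val + 1)) :
    (Finset.univ.filter fun i : Fin n => (b i : ℕ) + 1 = n + 1).card = 0 := by
  rw [Finset.card_eq_zero, Finset.filter_eq_empty_iff]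
  intro i _
  have h1 := (b i).isLt
  have h2 := i.isLt
  omega

lemma key_step (D : Derivation ℚ URing URing) (hD : ∀ l : ℕ, D (X l) = X (l + 1)) (n : ℕ)
    (b : (i : Fin n) → Fin (i.val + 1)) :
    ∑ k : Fin (n + 1), ∏ j ∈ Finset.Icc 1 (n + 1),
        (X ((Finset.univ.filter fun i : Fin (n + 1) =>
          ((Fin.snoc b k : ∀ i : Fin (n + 1), Fin (i.val + 1)) i : ℕ) + 1 = j).card) : URing)
      = D (X 0 * ∏ j ∈ Finset.Icc 1 n,
          X ((Finset.univ.filter fun i : Fin n => (b i : ℕ) + 1 = j).card)) := by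
  set c : ℕ → ℕ := fun j => (Finset.univ.filter fun i : Fin n => (b i : ℕ) + 1 = j).card with hc
  have hIcc : Finset.Icc 1 (n + 1) = insert (n + 1) (Finset.Icc 1 n) := by
    ext x; simp [Finset.mem_Icc]; omega
  have hnotmem : n + 1 ∉ Finset.Icc 1 n := by simp
  have hc0 : c (n + 1) = 0 := count_top n b
  have hterm : ∀ k : Fin (n + 1),
      (∏ j ∈ Finset.Icc 1 (n + 1),
        (X ((Finset.univ.filter fun i : Fin (n + 1) =>
          ((Fin.snoc b k : ∀ i : Fin (n + 1), Fin (i.val + 1)) i : ℕ) + 1 = j).card) : URing))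
      = X (c (n + 1) + if (k : ℕ) + 1 = n + 1 then 1 else 0) *
        ∏ j ∈ Finset.Icc 1 n, (X (c j + if (k : ℕ) + 1 = j then 1 else 0) : URing) := by
    intro k
    simp only [count_snoc n b k]
    rw [hIcc, Finset.prod_insert hnotmem]
  simp only [hterm]
  rw [Fin.sum_univ_castSucc]
  -- the last summand : k = last n
  have hlast : (X (c (n + 1) + if ((Fin.last n : Fin (n+1)) : ℕ) + 1 = n + 1 then 1 else 0) *
        ∏ j ∈ Finset.Icc 1 n,
          (X (c j + if ((Fin.last n : Fin (n+1)) : ℕ) + 1 = j then 1 else 0) : URing))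
      = X 1 * ∏ j ∈ Finset.Icc 1 n, (X (c j) : URing) := by
    rw [hc0]
    simp only [Fin.val_last, if_pos rfl]
    congr 1
    refine Finset.prod_congr rfl fun j hj => ?_
    have hj' := Finset.mem_Icc.mp hj
    rw [if_neg (by omega), add_zero]
  rw [hlast]
  -- the castSucc summands
  have hcast : ∀ k' : Fin n,
      (X (c (n + 1) + if ((k'.castSucc : Fin (n+1)) : ℕ) + 1 = n + 1 then 1 else 0) *
        ∏ j ∈ Finset.Icc 1 n,
          (X (c j + if ((k'.castSucc : Fin (n+1)) : ℕ) + 1 = j then 1 else 0) : URing))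
      = X 0 * (X (c ((k' : ℕ) + 1) + 1) *
          ∏ j ∈ (Finset.Icc 1 n).erase ((k' : ℕ) + 1), (X (c j) : URing)) := by
    intro k'
    have hk' := k'.isLt
    have hmem : (k' : ℕ) + 1 ∈ Finset.Icc 1 n := by simp [Finset.mem_Icc]
    rw [hc0, if_neg (by simp; omega), add_zero,
      ← Finset.mul_prod_erase _ _ hmem, if_pos (by simp)]
    congr 2
    refine Finset.prod_congr rfl fun j hj => ?_
    have := (Finset.mem_erase.mp hj).1
    rw [if_neg (by simpa using this.symm), add_zero]
  simp only [hcast]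
  -- right-hand side
  rw [D.leibniz, smul_eq_mul, smul_eq_mul, hD 0,
    D_finset_prod]
  simp only [hD]
  -- reindex the sum over Fin n as a sum over Icc 1 n
  have hre : ∑ k' : Fin n, (X 0 : URing) * (X (c ((k' : ℕ) + 1) + 1) *
        ∏ j ∈ (Finset.Icc 1 n).erase ((k' : ℕ) + 1), (X (c j) : URing))
      = ∑ j0 ∈ Finset.Icc 1 n, (X 0 : URing) * (X (c j0 + 1) *
        ∏ j ∈ (Finset.Icc 1 n).erase j0, (X (c j) : URing)) := by
    rw [Fin.sum_univ_eq_sum_range (fun k => (X 0 : URing) * (X (c (k + 1) + 1) *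
        ∏ j ∈ (Finset.Icc 1 n).erase (k + 1), (X (c j) : URing)))]
    rw [show Finset.Icc 1 n = Finset.Ico 1 (n + 1) by
      ext x; simp [Finset.mem_Icc, Finset.mem_Ico]]
    rw [Finset.sum_Ico_eq_sum_range]
    simp [add_comm 1]
  rw [hre, Finset.mul_sum]
  ring

/-- `h_0 = 1` and `h_{n+1} = D(u₀ · h_n)` for every `n ≥ 0`; equivalently,
`h_n = (D ∘ M_{u₀})^n (1)` where `M_{u₀}` is multiplication by `u₀` and `D` is the
derivation with `D(u_l) = u_{l+1}`. -/
theorem hPoly_recurrence (D : Derivation ℚ URing URing)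
    (hD : ∀ l : ℕ, D (X l) = X (l + 1)) :
    hPoly 0 = 1 ∧ (∀ n : ℕ, hPoly (n + 1) = D (X 0 * hPoly n)) ∧
      ∀ n : ℕ, hPoly n = (fun p : URing => D (X 0 * p))^[n] 1 := by
  have h0 : hPoly 0 = 1 := by
    rw [hPoly]
    simp
  have hrec : ∀ n : ℕ, hPoly (n + 1) = D (X 0 * hPoly n) := by
    intro n
    rw [hPoly,
      ← Equiv.sum_comp (Fin.snocEquiv fun i : Fin (n + 1) => Fin (i.val + 1))
        (fun a : (i : Fin (n + 1)) → Fin (i.val + 1) => ∏ j ∈ Finset.Icc 1 (n + 1),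
          (X ((Finset.univ.filter fun i : Fin (n + 1) => (a i : ℕ) + 1 = j).card) : URing)),
      Fintype.sum_prod_type, Finset.sum_comm]
    simp only [Fin.snocEquiv_apply]
    simp only [Fin.coe_castSucc, Fin.val_last]
    rw [Finset.sum_congr rfl (fun b _ => key_step D hD n b), ← map_sum, ← Finset.mul_sum,
      hPoly]
  refine ⟨h0, hrec, ?_⟩
  intro n
  induction n with
  | zero => simpa using h0
  | succ n ih =>
    rw [hrec n, ih, Function.iterate_succ_apply']
end

section
/- The row statistic and the diagonal statistic on natural growth sequences have equal total sums: for every n ≥ 0, Σ_{a ∈ T_n} ∏_{j=1}^{n} u_{|{i : a_i = j}|} = Σ_{a ∈ T_n} ∏_{j=1}^{n} u_{|{i : a_i = i − j + 1}|} in R. -/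
open Finset MvPolynomial

/-- The row statistic and the diagonal statistic on natural growth sequences have equal
total sums: for every `n`,
`Σ_{a ∈ T_n} ∏_{j=1}^{n} u_{|{i : a_i = j}|} = Σ_{a ∈ T_n} ∏_{j=1}^{n} u_{|{i : a_i = i−j+1}|}`.
A natural growth sequence `a = (a_1, …, a_n)` with `1 ≤ a_i ≤ i` is encoded as
`a : (i : Fin n) → Fin (i.val + 1)`, the `i`-th entry (`i = 1, …, n`, i.e. position
`(i : ℕ) + 1`) being `(a i : ℕ) + 1`; the condition `a_i = i − j + 1` is written
subtraction-free as `a_i + j = i + 1`, i.e. `((a i : ℕ) + 1) + j = ((i : ℕ) + 1) + 1`. -/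
theorem row_eq_diagonal_statistic (n : ℕ) :
    (∑ a : (i : Fin n) → Fin (i.val + 1),
      ∏ j ∈ Finset.Icc 1 n,
        (X ((Finset.univ.filter fun i : Fin n => (a i : ℕ) + 1 = j).card) : URing)) =
    ∑ a : (i : Fin n) → Fin (i.val + 1),
      ∏ j ∈ Finset.Icc 1 n,
        X ((Finset.univ.filter fun i : Fin n => (a i : ℕ) + 1 + j = (i : ℕ) + 2).card) := by
  refine Fintype.sum_equiv (Equiv.piCongrRight fun i : Fin n => Fin.revPerm)
    _ _ fun a => Finset.prod_congr rfl fun j hj => ?_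
  congr 2
  ext i
  have hlt := (a i).isLt
  simp only [Equiv.piCongrRight_apply, Pi.map_apply, Fin.revPerm_apply, Fin.val_rev, Finset.mem_filter, Finset.mem_univ, true_and]
  omega
end

section
/- Let E(n,k) be the number of natural growth sequences a ∈ T_n that take exactly k distinct values. Then for all n ≥ 1 and 1 ≤ k ≤ n: E(n,k) = E(n, n+1−k), and for n ≥ 2: E(n,k) = (n+1−k)·E(n−1, k−1) + k·E(n−1, k) (so the E(n,k) are the Eulerian numbers). -/
open Finset

/-- `eulerianCount n k` is the number of natural growth sequences `a ∈ T_n`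
(`1 ≤ a_i ≤ i`, encoded as `a : (i : Fin n) → Fin (i.val + 1)`) taking exactly `k`
distinct values. -/
noncomputable def eulerianCount (n k : ℕ) : ℕ :=
  Nat.card {a : (i : Fin n) → Fin (i.val + 1) //
    (Finset.univ.image fun i : Fin n => (a i : ℕ)).card = k}

open Classical in
lemma ec_eq (n k : ℕ) :
    eulerianCount n k =
      (Finset.univ.filter fun a : (i : Fin n) → Fin (i.val + 1) =>
        (Finset.univ.image fun i : Fin n => (a i : ℕ)).card = k).card := by
  rw [eulerianCount, Nat.card_eq_fintype_card, Fintype.card_subtype]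

lemma ec_gt {n k : ℕ} (h : n < k) : eulerianCount n k = 0 := by
  refine Nat.card_eq_zero.mpr (Or.inl ⟨fun a => ?_⟩)
  have h2 := a.2
  have hle : (Finset.univ.image fun i : Fin n => (a.1 i : ℕ)).card ≤ n := by
    refine le_trans Finset.card_image_le (by simp)
  omega

lemma ec_zero {n : ℕ} (hn : 1 ≤ n) : eulerianCount n 0 = 0 := by
  refine Nat.card_eq_zero.mpr (Or.inl ⟨fun a => ?_⟩)
  have h2 := a.2
  rw [Finset.card_eq_zero, Finset.image_eq_empty, Finset.univ_eq_empty_iff] at h2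
  exact h2.false ⟨0, hn⟩

def gsEquiv (m : ℕ) : ((i : Fin (m + 1)) → Fin (i.val + 1)) ≃
    (((i : Fin m) → Fin (i.val + 1)) × Fin (m + 1)) where
  toFun a := (fun i => a i.castSucc, a (Fin.last m))
  invFun p := Fin.snoc (α := fun i : Fin (m + 1) => Fin (i.val + 1)) p.1 p.2
  left_inv a := by
    funext i
    induction i using Fin.lastCases with
    | last => simp [Fin.snoc_last]
    | cast i => simp [Fin.snoc_castSucc]
  right_inv p := by
    refine Prod.ext ?_ ?_
    · funext i
      simp [Fin.snoc_castSucc]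
    · simp [Fin.snoc_last]

lemma image_succ {m : ℕ} (a : (i : Fin (m + 1)) → Fin (i.val + 1)) :
    (Finset.univ.image fun i : Fin (m + 1) => (a i : ℕ)) =
      insert (a (Fin.last m) : ℕ)
        (Finset.univ.image fun i : Fin m => (a i.castSucc : ℕ)) := by
  rw [Fin.univ_castSuccEmb, Finset.cons_eq_insert, Finset.image_insert, Finset.map_eq_image, Finset.image_image]
  rfl

lemma card_filter_mem {m : ℕ} (S : Finset ℕ) (hS : ∀ x ∈ S, x < m + 1) :
    (Finset.univ.filter fun v : Fin (m + 1) => (v : ℕ) ∈ S).card = S.card := by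
  refine Finset.card_bij (fun v _ => (v : ℕ)) ?_ ?_ ?_
  · intro v hv; exact (Finset.mem_filter.mp hv).2
  · intro u _ v _ h; exact Fin.val_injective h
  · intro x hx; exact ⟨⟨x, hS x hx⟩, Finset.mem_filter.mpr ⟨Finset.mem_univ _, hx⟩, rfl⟩

lemma inner_count {m k : ℕ} (S : Finset ℕ) (hS : ∀ x ∈ S, x < m + 1) :
    (Finset.univ.filter fun v : Fin (m + 1) => (insert (v : ℕ) S).card = k).card =
      (if S.card = k then k else 0) +
        (if S.card + 1 = k then m + 1 - S.card else 0) := by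
  have key : ∀ v : Fin (m + 1),
      (insert (v : ℕ) S).card = if (v : ℕ) ∈ S then S.card else S.card + 1 := by
    intro v
    split
    · rw [Finset.insert_eq_self.mpr ‹_›]
    · rw [Finset.card_insert_of_notMem ‹_›]
  by_cases h1 : S.card = k
  · have hfe : (Finset.univ.filter fun v : Fin (m + 1) => (insert (v : ℕ) S).card = k) =
        Finset.univ.filter fun v : Fin (m + 1) => (v : ℕ) ∈ S := by
      apply Finset.filter_congr
      intro v _
      rw [key v]
      split <;> simp_all <;> omega
    rw [hfe, card_filter_mem S hS]
    simp [h1]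
  · by_cases h2 : S.card + 1 = k
    · have hfe : (Finset.univ.filter fun v : Fin (m + 1) => (insert (v : ℕ) S).card = k) =
          Finset.univ.filter fun v : Fin (m + 1) => ¬ ((v : ℕ) ∈ S) := by
        apply Finset.filter_congr
        intro v _
        rw [key v]
        split <;> simp_all <;> omega
      have hadd := Finset.card_filter_add_card_filter_not
        (s := (Finset.univ : Finset (Fin (m + 1)))) (p := fun v : Fin (m + 1) => (v : ℕ) ∈ S)
      rw [card_filter_mem S hS] at hadd
      rw [hfe]
      simp only [Finset.card_univ, Fintype.card_fin] at hadd
      simp only [h1, h2, if_false, if_true, if_neg h1, if_pos h2]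
      omega
    · have hfe : (Finset.univ.filter fun v : Fin (m + 1) => (insert (v : ℕ) S).card = k) =
          (∅ : Finset (Fin (m + 1))) := by
        refine Finset.eq_empty_of_forall_notMem ?_
        intro v hv
        rw [Finset.mem_filter, key v] at hv
        rcases hv with ⟨-, hv⟩
        split at hv <;> omega
      rw [hfe]
      simp [h1, h2]

lemma img_lt {m : ℕ} (b : (i : Fin m) → Fin (i.val + 1)) :
    ∀ x ∈ (Finset.univ.image fun i : Fin m => (b i : ℕ)), x < m + 1 := by
  intro x hx
  rw [Finset.mem_image] at hx
  obtain ⟨i, -, rfl⟩ := hx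
  have := (b i).isLt
  have := i.isLt
  omega

open Classical in
lemma ec_rec (m k : ℕ) (hk : 1 ≤ k) :
    eulerianCount (m + 1) k =
      k * eulerianCount m k + (m + 2 - k) * eulerianCount m (k - 1) := by
  rw [eulerianCount, Nat.card_eq_fintype_card]
  have e1 : {a : (i : Fin (m + 1)) → Fin (i.val + 1) //
      (Finset.univ.image fun i : Fin (m + 1) => (a i : ℕ)).card = k} ≃
      Σ b : (i : Fin m) → Fin (i.val + 1),
        {v : Fin (m + 1) //
          (insert (v : ℕ) (Finset.univ.image fun i : Fin m => (b i : ℕ))).card = k} := by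
    refine (Equiv.subtypeEquiv (gsEquiv m) ?_).trans
      (Equiv.subtypeProdEquivSigmaSubtype
        (fun (b : (i : Fin m) → Fin (i.val + 1)) (v : Fin (m + 1)) =>
          (insert (v : ℕ) (Finset.univ.image fun i : Fin m => (b i : ℕ))).card = k))
    intro a
    rw [image_succ]
    exact Iff.rfl
  rw [Fintype.card_congr e1, Fintype.card_sigma]
  have hterm : ∀ b : (i : Fin m) → Fin (i.val + 1),
      Fintype.card {v : Fin (m + 1) //
          (insert (v : ℕ) (Finset.univ.image fun i : Fin m => (b i : ℕ))).card = k} =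
        (if (Finset.univ.image fun i : Fin m => (b i : ℕ)).card = k then k else 0) +
          (if (Finset.univ.image fun i : Fin m => (b i : ℕ)).card = k - 1
            then m + 2 - k else 0) := by
    intro b
    rw [Fintype.card_subtype, inner_count _ (img_lt b)]
    have h1 : ((Finset.univ.image fun i : Fin m => (b i : ℕ)).card + 1 = k) ↔
        ((Finset.univ.image fun i : Fin m => (b i : ℕ)).card = k - 1) := by omega
    split_ifs with a1 a2 a3 a4 a5 <;> omega
  rw [Finset.sum_congr rfl (fun b _ => hterm b), Finset.sum_add_distrib,
    ← Finset.sum_filter, ← Finset.sum_filter, Finset.sum_const, Finset.sum_const,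
    smul_eq_mul, smul_eq_mul, ec_eq m k, ec_eq m (k - 1)]
  ring

lemma ec_symm : ∀ n k : ℕ, 1 ≤ k → k ≤ n →
    eulerianCount n k = eulerianCount n (n + 1 - k) := by
  intro n
  induction n with
  | zero => intro k h1 h2; omega
  | succ m ih =>
    intro k hk1 hk2
    rcases Nat.eq_zero_or_pos m with rfl | hm
    · interval_cases k
      rfl
    · have h1 : m + 1 + 1 - k = m + 2 - k := by omega
      rw [h1, ec_rec m k hk1, ec_rec m (m + 2 - k) (by omega)]
      have h2 : m + 2 - (m + 2 - k) = k := by omega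
      have h3 : m + 2 - k - 1 = m + 1 - k := by omega
      rw [h2, h3]
      have hA : eulerianCount m k = eulerianCount m (m + 1 - k) := by
        rcases Nat.lt_or_ge m k with h | h
        · have hk : k = m + 1 := by omega
          rw [hk]
          have : m + 1 - (m + 1) = 0 := by omega
          rw [this, ec_gt (by omega), ec_zero hm]
        · exact ih k hk1 h
      have hB : eulerianCount m (k - 1) = eulerianCount m (m + 2 - k) := by
        rcases Nat.lt_or_ge k 2 with h | h
        · have hk : k = 1 := by omega
          subst hk
          simp only [Nat.sub_self]
          rw [ec_zero hm, ec_gt (show m < m + 2 - 1 by omega)]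
        · have := ih (k - 1) (by omega) (by omega)
          have h4 : m + 1 - (k - 1) = m + 2 - k := by omega
          rwa [h4] at this
      rw [hA, hB]
      ring

/-- For `1 ≤ k ≤ n`, `E(n,k) = E(n, n+1−k)`, and for `n ≥ 2`,
`E(n,k) = (n+1−k)·E(n−1, k−1) + k·E(n−1, k)`; so the `E(n,k)` are the Eulerian
numbers. -/
theorem eulerianCount_symm_and_recurrence :
    (∀ n k : ℕ, 1 ≤ k → k ≤ n → eulerianCount n k = eulerianCount n (n + 1 - k)) ∧
    (∀ n k : ℕ, 2 ≤ n → 1 ≤ k → k ≤ n →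
      eulerianCount n k =
        (n + 1 - k) * eulerianCount (n - 1) (k - 1) + k * eulerianCount (n - 1) k) := by
  constructor
  · exact ec_symm
  · intro n k hn hk1 hk2
    obtain ⟨m, rfl⟩ : ∃ m, n = m + 1 := ⟨n - 1, by omega⟩
    have h1 : m + 1 + 1 - k = m + 2 - k := by omega
    have h2 : m + 1 - 1 = m := by omega
    rw [h1, h2, ec_rec m k hk1]
    ring
end

section
/- Define h_n ∈ R by h_0 = 1 and h_{n+1} = D(u_0·h_n). Then for all m, n ≥ 0 the identity h_{m+n+1} = Σ_{l≥0} (∂h_m/∂u_l)·D^l( u_0^2·D(h_n) ) + D( u_0·h_m·h_n ) holds in R (the sum is finite since h_m involves only u_0,…,u_{m-1}). -/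
open Finset MvPolynomial

lemma pderiv_X0_mul (l : ℕ) (g : URing) :
    pderiv l (X 0 * g) = (if l = 0 then g else 0) + X 0 * pderiv l g := by
  simp only [Derivation.leibniz, smul_eq_mul, pderiv_X, Pi.single_apply]
  by_cases hl : l = 0
  · subst hl; simp; ring
  · rw [if_neg (by omega : ¬(0 : ℕ) = l), if_neg hl]; ring

lemma pderiv_D_succ (D : Derivation ℚ URing URing)
    (hD : ∀ l : ℕ, D (X l) = X (l + 1)) (k : ℕ) (f : URing) :
    pderiv (k + 1) (D f) = D (pderiv (k + 1) f) + pderiv k f := by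
  have hb : ⁅(pderiv (k + 1) : Derivation ℚ URing URing), D⁆ = pderiv k := by
    apply MvPolynomial.derivation_ext
    intro l
    rw [Derivation.commutator_apply, hD]
    simp only [pderiv_X, Pi.single_apply]
    by_cases hkl : k = l
    · subst hkl
      rw [if_pos rfl, if_pos rfl, if_neg (by omega : ¬k = k + 1)]
      simp
    · by_cases hlk : l = k + 1
      · rw [if_neg (by omega : ¬l + 1 = k + 1), if_pos hlk,
          if_neg (by omega : ¬l = k)]
        simp
      · rw [if_neg (by omega : ¬l + 1 = k + 1), if_neg hlk,
          if_neg (by omega : ¬l = k)]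
        simp
  have := congrArg (fun (E : Derivation ℚ URing URing) => E f) hb
  simp only [Derivation.commutator_apply] at this
  linear_combination this

lemma pderiv_D_zero (D : Derivation ℚ URing URing)
    (hD : ∀ l : ℕ, D (X l) = X (l + 1)) (f : URing) :
    pderiv 0 (D f) = D (pderiv 0 f) := by
  have hb : ⁅(pderiv 0 : Derivation ℚ URing URing), D⁆ = 0 := by
    apply MvPolynomial.derivation_ext
    intro l
    rw [Derivation.commutator_apply, hD]
    simp only [pderiv_X, Pi.single_apply]
    rw [if_neg (by omega : ¬l + 1 = 0)]
    by_cases h0l : l = 0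
    · subst h0l; simp
    · rw [if_neg h0l]; simp
  have := congrArg (fun (E : Derivation ℚ URing URing) => E f) hb
  simp only [Derivation.commutator_apply, Derivation.zero_apply] at this
  linear_combination this

/-- Chain rule for the Fréchet derivative: `(Df)_*(a) = D (f_*(a))` (truncated sums). -/
lemma freschet_D (D : Derivation ℚ URing URing)
    (hD : ∀ l : ℕ, D (X l) = X (l + 1)) (N : ℕ) (f : URing)
    (hf : ∀ l, N < l → pderiv l f = 0) (a : URing) :
    ∑ l ∈ Finset.range (N + 2), pderiv l (D f) * (⇑D)^[l] a
      = D (∑ l ∈ Finset.range (N + 1), pderiv l f * (⇑D)^[l] a) := by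
  rw [map_sum]
  have hR : ∀ l ∈ Finset.range (N + 1),
      D (pderiv l f * (⇑D)^[l] a)
        = D (pderiv l f) * (⇑D)^[l] a + pderiv l f * (⇑D)^[l + 1] a := by
    intro l _
    rw [Derivation.leibniz, Function.iterate_succ_apply']
    simp only [smul_eq_mul]
    ring
  rw [Finset.sum_congr rfl hR, Finset.sum_add_distrib]
  rw [Finset.sum_range_succ' (fun l => pderiv l (D f) * (⇑D)^[l] a) (N + 1)]
  have hL : ∀ l ∈ Finset.range (N + 1),
      pderiv (l + 1) (D f) * (⇑D)^[l + 1] a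
        = D (pderiv (l + 1) f) * (⇑D)^[l + 1] a + pderiv l f * (⇑D)^[l + 1] a := by
    intro l _
    rw [pderiv_D_succ D hD]
    ring
  rw [Finset.sum_congr rfl hL, Finset.sum_add_distrib, pderiv_D_zero D hD]
  have : ∑ l ∈ Finset.range (N + 1), D (pderiv (l + 1) f) * (⇑D)^[l + 1] a
      = ∑ l ∈ Finset.range N, D (pderiv (l + 1) f) * (⇑D)^[l + 1] a := by
    rw [Finset.sum_range_succ, hf (N + 1) (by omega)]
    simp
  rw [this]
  rw [Finset.sum_range_succ' (fun l => D (pderiv l f) * (⇑D)^[l] a) N]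
  ring

lemma pderiv_h_eq_zero (D : Derivation ℚ URing URing)
    (hD : ∀ l : ℕ, D (X l) = X (l + 1))
    (h : ℕ → URing) (h0 : h 0 = 1) (hrec : ∀ n : ℕ, h (n + 1) = D (X 0 * h n)) :
    ∀ m l, m < l → pderiv l (h m) = 0 := by
  intro m
  induction m with
  | zero => intro l _; rw [h0]; simp
  | succ m ih =>
    intro l hl
    obtain ⟨k, rfl⟩ : ∃ k, l = k + 1 := ⟨l - 1, by omega⟩
    rw [hrec, pderiv_D_succ D hD, pderiv_X0_mul, pderiv_X0_mul,
      if_neg (by omega : ¬k + 1 = 0), if_neg (by omega : ¬k = 0),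
      ih (k + 1) (by omega), ih k (by omega)]
    simp

/-- Define `h_n ∈ R` by `h_0 = 1`, `h_{n+1} = D(u₀·h_n)`, where `D` is the derivation
with `D(u_l) = u_{l+1}`.  Then for all `m, n ≥ 0`,
`h_{m+n+1} = Σ_{l≥0} (∂h_m/∂u_l)·D^l(u₀²·D(h_n)) + D(u₀·h_m·h_n)`.
The sum over `l ≥ 0` is finite; since `h_m` involves only the variables
`u_0, …, u_m`, it equals the sum over `0 ≤ l ≤ m`. -/
theorem hPoly_freschet_identity (D : Derivation ℚ URing URing)
    (hD : ∀ l : ℕ, D (X l) = X (l + 1))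
    (h : ℕ → URing) (h0 : h 0 = 1) (hrec : ∀ n : ℕ, h (n + 1) = D (X 0 * h n))
    (m n : ℕ) :
    h (m + n + 1) =
      (∑ l ∈ Finset.range (m + 1), pderiv l (h m) * (⇑D)^[l] (X 0 ^ 2 * D (h n))) +
        D (X 0 * h m * h n) := by
  set a : URing := X 0 ^ 2 * D (h n) with ha
  induction m with
  | zero =>
    have he : (0 : ℕ) + n + 1 = n + 1 := by omega
    rw [he, hrec, h0]
    simp
  | succ m ih =>
    -- left side
    have hL : h (m + 1 + n + 1) = D (X 0 * (∑ l ∈ Finset.range (m + 1),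
        pderiv l (h m) * (⇑D)^[l] a) + X 0 * D (X 0 * h m * h n)) := by
      rw [show m + 1 + n + 1 = (m + n + 1) + 1 from by omega, hrec, ih, mul_add]
    -- right side: rewrite the sum using the chain rule
    have hsum : ∑ l ∈ Finset.range (m + 2), pderiv l (h (m + 1)) * (⇑D)^[l] a
        = D (h m * a + X 0 * ∑ l ∈ Finset.range (m + 1),
            pderiv l (h m) * (⇑D)^[l] a) := by
      rw [hrec m]
      rw [freschet_D D hD m (X 0 * h m) (by
        intro l hl
        rw [pderiv_X0_mul, if_neg (by omega : ¬l = 0),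
          pderiv_h_eq_zero D hD h h0 hrec m l hl]
        simp) a]
      congr 1
      rw [Finset.sum_range_succ' (fun l => pderiv l (X 0 * h m) * (⇑D)^[l] a) m]
      have h1 : ∀ l ∈ Finset.range m, pderiv (l + 1) (X 0 * h m) * (⇑D)^[l + 1] a
          = X 0 * (pderiv (l + 1) (h m) * (⇑D)^[l + 1] a) := by
        intro l _
        rw [pderiv_X0_mul, if_neg (by omega : ¬l + 1 = 0)]
        ring
      rw [Finset.sum_congr rfl h1, ← Finset.mul_sum]
      have h0' : (pderiv 0 (X 0 * h m) : URing) * (⇑D)^[0] a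
          = h m * a + X 0 * (pderiv 0 (h m) * (⇑D)^[0] a) := by
        rw [pderiv_X0_mul, if_pos rfl]
        simp only [Function.iterate_zero, id_eq]
        ring
      rw [h0']
      rw [Finset.sum_range_succ' (fun l => pderiv l (h m) * (⇑D)^[l] a) m,
        mul_add, Finset.mul_sum]
      ring
    rw [hL, hsum]
    rw [← map_add]
    congr 1
    have hleib : D (X 0 * h m * h n)
        = D (X 0 * h m) * h n + X 0 * h m * D (h n) := by
      rw [Derivation.leibniz]
      simp only [smul_eq_mul]
      ring
    rw [hleib, ha, ← hrec m]
    ring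
end

section
/- Define a_n = Σ_{π ∈ Π^B_n} u_{pos(π_0)} · ∏_{j=1}^{k} u_{pos(π_j)−1}·u_{pos(−π_j)} ∈ R, where for π ∈ Π^B_n with 0-block π_0 and block pairs {π_j, −π_j} (j = 1,…,k), from each pair π_j denotes the block whose element of minimal absolute value is positive, and pos(β) = |{i ∈ β : i > 0}|. Then a_0 = u_0 and a_{n+1} = D(a_n) + u_0^2 · a_n for all n ≥ 0. -/
open Finset MvPolynomial

/-- `pos β = |{i ∈ β : i > 0}|`, the number of positive elements of a block. -/
def posCount (β : Finset ℤ) : ℕ := (β.filter fun x => 0 < x).card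

/-- The variable attached to a block `β` of a B-type partition: if the element of `β`
of minimal absolute value is positive (which happens exactly for the blocks `π_j`
representing the block pairs), the variable is `u_{pos(β)−1}`; otherwise (for the
0-block `π₀` and the blocks `−π_j`) it is `u_{pos(β)}`.  Hence the product of
`blockVar` over all blocks of `π` is `u_{pos(π₀)} ∏_j u_{pos(π_j)−1}·u_{pos(−π_j)}`. -/
noncomputable def blockVar (β : Finset ℤ) : URing :=
  if ∃ m ∈ β, 0 < m ∧ ∀ x ∈ β, m ≤ |x| then X (posCount β - 1) else X (posCount β)

/-- A B-type partition of `{−n, …, n}`: a set partition `π` of `Finset.Icc (−n) n ⊆ ℤ`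
such that `−β ∈ π` for every block `β ∈ π`, and exactly one block `π₀` satisfies
`π₀ = −π₀`. -/
def IsBPartition {n : ℕ} (π : Finpartition (Finset.Icc (-(n : ℤ)) n)) : Prop :=
  (∀ β ∈ π.parts, β.image (fun x => -x) ∈ π.parts) ∧
    (π.parts.filter fun β => β.image (fun x => -x) = β).card = 1

/-- `a_n = Σ_{π ∈ Π^B_n} u_{pos(π₀)} ∏_{j=1}^{k} u_{pos(π_j)−1}·u_{pos(−π_j)}`. -/
noncomputable def aPoly (n : ℕ) : URing :=
  ∑ᶠ π : {π : Finpartition (Finset.Icc (-(n : ℤ)) n) // IsBPartition π},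
    ∏ β ∈ π.val.parts, blockVar β

/-!
A B-type partition of `{-(n+1), …, n+1}` restricts to one of `{-n, …, n}`, and it is recovered
from the restriction `π` together with one of the following choices: either `{n+1}` and
`{-(n+1)}` are blocks, or `n+1` joins a block `β` of `π` and `-(n+1)` joins `-β` (the same
block when `β` is the 0-block). The first choice multiplies the weight by `u₀²`. In the second,
`n+1` is the element of largest absolute value of its block, so it raises the variable of `β`
from `u_l` to `u_{l+1} = D u_l`, while `-(n+1)` changes no variable; summing over `β` gives
`D` of the weight by the Leibniz rule.
-/

open scoped Pointwise

theorem Derivation.leibniz_finset_prod {R A M : Type*} [CommSemiring R] [CommSemiring A]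
    [Algebra R A] [AddCommMonoid M] [Module A M] [Module R M] (D : Derivation R A M)
    {ι : Type*} [DecidableEq ι] (s : Finset ι) (f : ι → A) :
    D (∏ i ∈ s, f i) = ∑ i ∈ s, (∏ j ∈ s.erase i, f j) • D (f i) := by
  induction s using Finset.induction_on with
  | empty => simp
  | insert a s ha ih =>
    rw [prod_insert ha, D.leibniz, ih, smul_sum, sum_insert ha, erase_insert ha, add_comm]
    congr 1
    refine sum_congr rfl fun i hi => ?_
    rw [erase_insert_of_ne (ne_of_mem_of_not_mem hi ha).symm,
      prod_insert fun h => ha (mem_of_mem_erase h), mul_smul]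

theorem Finpartition.mem_restrict_parts {α : Type*} [DecidableEq α] {s t c : Finset α}
    (P : Finpartition s) (h : t ⊆ s) :
    c ∈ (P.restrict h).parts ↔ c.Nonempty ∧ ∃ d ∈ P.parts, d ∩ t = c := by
  simp [Finpartition.restrict, nonempty_iff_ne_empty]

theorem Finpartition.inter_eq_inter_iff {α : Type*} [DecidableEq α] {s u d d' : Finset α}
    (P : Finpartition s) (hd : d ∈ P.parts) (hd' : d' ∈ P.parts) (hne : (d' ∩ u).Nonempty) :
    d ∩ u = d' ∩ u ↔ d = d' := by
  refine ⟨fun h => ?_, fun h => h ▸ rfl⟩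
  obtain ⟨x, hx⟩ := hne
  exact P.eq_of_mem_parts hd hd' (mem_inter.1 (h ▸ hx)).1 (mem_inter.1 hx).1

section BlockVar

variable {β : Finset ℤ} {s t : ℤ}

abbrev HasPosAbsMin (β : Finset ℤ) : Prop := ∃ m ∈ β, 0 < m ∧ ∀ x ∈ β, m ≤ |x|

theorem blockVar_def (β : Finset ℤ) :
    blockVar β = if HasPosAbsMin β then X (posCount β - 1) else X (posCount β) := rfl

theorem posCount_insert_of_nonpos (hs : s ≤ 0) : posCount (insert s β) = posCount β := by
  rw [posCount, filter_insert, if_neg hs.not_gt, posCount]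

theorem posCount_insert_of_pos (hs : 0 < s) (hsβ : s ∉ β) :
    posCount (insert s β) = posCount β + 1 := by
  rw [posCount, filter_insert, if_pos hs, card_insert_of_notMem (by simp [hsβ]), posCount]

theorem hasPosAbsMin_insert_neg (ht : 0 ≤ t) (hβ : ∀ x ∈ β, |x| ≤ t) :
    HasPosAbsMin (insert (-t) β) ↔ HasPosAbsMin β := by
  simp only [HasPosAbsMin, mem_insert, forall_eq_or_imp, exists_eq_or_imp, abs_neg]
  constructor
  · rintro (⟨hm, -⟩ | ⟨m, hm, hm0, -, hmin⟩)
    · omega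
    · exact ⟨m, hm, hm0, hmin⟩
  · rintro ⟨m, hm, hm0, hmin⟩
    exact Or.inr ⟨m, hm, hm0, (le_abs_self m).trans ((hβ m hm).trans (abs_of_nonneg ht).ge),
      hmin⟩

theorem hasPosAbsMin_insert_of_lt (hne : β.Nonempty) (hβ : ∀ x ∈ β, |x| < t) :
    HasPosAbsMin (insert t β) ↔ HasPosAbsMin β := by
  obtain ⟨y, hy⟩ := hne
  simp only [HasPosAbsMin, mem_insert, forall_eq_or_imp, exists_eq_or_imp]
  constructor
  · rintro (⟨-, -, hmin⟩ | ⟨m, hm, hm0, -, hmin⟩)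
    · exact absurd (hmin y hy) (hβ y hy).not_ge
    · exact ⟨m, hm, hm0, hmin⟩
  · rintro ⟨m, hm, hm0, hmin⟩
    exact Or.inr ⟨m, hm, hm0, (le_abs_self m).trans ((hβ m hm).le.trans (le_abs_self t)), hmin⟩

theorem blockVar_insert_neg (ht : 0 ≤ t) (hβ : ∀ x ∈ β, |x| ≤ t) :
    blockVar (insert (-t) β) = blockVar β := by
  simp only [blockVar_def, hasPosAbsMin_insert_neg ht hβ,
    posCount_insert_of_nonpos (neg_nonpos.2 ht)]

theorem blockVar_insert_of_lt (D : Derivation ℚ URing URing) (hD : ∀ l, D (X l) = X (l + 1))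
    (hne : β.Nonempty) (hβ : ∀ x ∈ β, |x| < t) :
    blockVar (insert t β) = D (blockVar β) := by
  obtain ⟨y, hy⟩ := hne
  have ht : 0 < t := (abs_nonneg y).trans_lt (hβ y hy)
  have htβ : t ∉ β := fun h => (hβ t h).not_ge (le_abs_self t)
  simp only [blockVar_def, hasPosAbsMin_insert_of_lt ⟨y, hy⟩ hβ,
    posCount_insert_of_pos ht htβ]
  split_ifs with hmin
  · obtain ⟨m, hm, hm0, -⟩ := hmin
    have : 0 < posCount β := card_pos.2 ⟨m, mem_filter.2 ⟨hm, hm0⟩⟩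
    rw [hD, Nat.sub_add_cancel this, Nat.add_sub_cancel]
  · rw [hD]

theorem blockVar_singleton_of_pos (hs : 0 < s) : blockVar {s} = X 0 := by
  have : HasPosAbsMin {s} := ⟨s, mem_singleton_self s, hs, by simp [le_abs_self]⟩
  rw [blockVar_def, if_pos this, posCount, filter_singleton, if_pos hs, card_singleton]

theorem blockVar_singleton_of_nonpos (hs : s ≤ 0) : blockVar {s} = X 0 := by
  have : ¬ HasPosAbsMin {s} := fun ⟨m, hm, hm0, _⟩ => by rw [mem_singleton] at hm; omega
  rw [blockVar_def, if_neg this, posCount, filter_singleton, if_neg hs.not_gt, card_empty]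

end BlockVar

-- Casting through `ℕ` makes `I[n + 1]` syntactically the ground set of `aPoly (n + 1)`.
notation "I[" n "]" => Finset.Icc (-((n : ℕ) : ℤ)) ((n : ℕ) : ℤ)

section GroundSet

variable {n : ℕ}

theorem mem_Icc_succ {x : ℤ} : x ∈ I[n + 1] ↔ x ∈ I[n] ∨ x = n + 1 ∨ x = -(n + 1) := by
  simp only [mem_Icc]; push_cast; omega

theorem Icc_subset_Icc_succ : I[n] ⊆ I[n + 1] := fun _ hx => mem_Icc_succ.2 (Or.inl hx)

theorem succ_notMem_Icc : (n + 1 : ℤ) ∉ I[n] := by simp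

theorem neg_succ_notMem_Icc : -(n + 1 : ℤ) ∉ I[n] := by simp

theorem neg_Icc : -I[n] = I[n] := by
  ext x
  simp only [mem_neg', mem_Icc]
  omega

theorem abs_lt_of_mem_Icc {x : ℤ} (hx : x ∈ I[n]) : |x| < n + 1 :=
  (abs_le.2 (mem_Icc.1 hx)).trans_lt (lt_add_one _)

end GroundSet

section BPartition

variable {n : ℕ}

theorem isBPartition_iff {π : Finpartition I[n]} :
    IsBPartition π ↔ (∀ β ∈ π.parts, -β ∈ π.parts) ∧ ∀ β ∈ π.parts, -β = β → (0 : ℤ) ∈ β := by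
  simp only [IsBPartition, image_neg_eq_neg]
  refine and_congr_right fun hneg => ?_
  obtain ⟨β₀, hβ₀, h0⟩ := π.exists_mem (show (0 : ℤ) ∈ I[n] by simp)
  have hsymm₀ : -β₀ = β₀ := π.eq_of_mem_parts (hneg β₀ hβ₀) hβ₀ (by simpa using h0) h0
  rw [card_eq_one]
  constructor
  · rintro ⟨a, ha⟩ β hβ hsymm
    have hβa : β = a := mem_singleton.1 (ha ▸ mem_filter.2 ⟨hβ, hsymm⟩)
    have hβ₀a : β₀ = a := mem_singleton.1 (ha ▸ mem_filter.2 ⟨hβ₀, hsymm₀⟩)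
    exact (hβa.trans hβ₀a.symm) ▸ h0
  · intro hzero
    refine ⟨β₀, eq_singleton_iff_unique_mem.2 ⟨mem_filter.2 ⟨hβ₀, hsymm₀⟩, fun β hβ => ?_⟩⟩
    obtain ⟨hβ, hsymm⟩ := mem_filter.1 hβ
    exact π.eq_of_mem_parts hβ hβ₀ (hzero β hβ hsymm) h0

theorem IsBPartition.neg_mem {π : Finpartition I[n]} (hπ : IsBPartition π) {β : Finset ℤ}
    (hβ : β ∈ π.parts) : -β ∈ π.parts :=
  (isBPartition_iff.1 hπ).1 β hβ

abbrev BPartition (n : ℕ) : Type := {π : Finpartition I[n] // IsBPartition π}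

noncomputable instance : Fintype (BPartition n) := Fintype.ofFinite _

noncomputable def weight {s : Finset ℤ} (π : Finpartition s) : URing := ∏ β ∈ π.parts, blockVar β

theorem aPoly_eq_sum (n : ℕ) : aPoly n = ∑ π : BPartition n, weight π.1 :=
  finsum_eq_sum_of_fintype _

end BPartition

section Extension

variable {n : ℕ} {π : Finpartition I[n]} {β γ : Finset ℤ}

noncomputable def extendBySingletons (π : Finpartition I[n]) : Finpartition I[n + 1] :=
  (π.extend (b := {(n + 1 : ℤ)}) (singleton_ne_empty _) (disjoint_singleton_right.2 succ_notMem_Icc)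
    rfl).extend (b := {-(n + 1 : ℤ)}) (singleton_ne_empty _)
    (disjoint_singleton_right.2 (by
      simp only [sup_eq_union, mem_union, mem_singleton, not_or]
      exact ⟨neg_succ_notMem_Icc, by omega⟩))
    (by ext; simp only [sup_eq_union, mem_union, mem_singleton, mem_Icc_succ]; tauto)

theorem extendBySingletons_parts (π : Finpartition I[n]) :
    (extendBySingletons π).parts = insert {-(n + 1 : ℤ)} (insert {(n + 1 : ℤ)} π.parts) := rfl

def extendPart (n : ℕ) (β γ : Finset ℤ) : Finset ℤ :=
  (if γ = -β then insert (-(n + 1 : ℤ)) else id) ((if γ = β then insert (n + 1 : ℤ) else id) γ)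

theorem mem_extendPart {x : ℤ} :
    x ∈ extendPart n β γ ↔ x ∈ γ ∨ (γ = β ∧ x = n + 1) ∨ (γ = -β ∧ x = -(n + 1)) := by
  unfold extendPart
  split_ifs <;> simp only [mem_insert, id_eq] <;> tauto

theorem extendPart_of_ne (h : γ ≠ β) (h' : γ ≠ -β) : extendPart n β γ = γ := by
  simp [extendPart, h, h']

theorem subset_extendPart : γ ⊆ extendPart n β γ := fun _ hx => mem_extendPart.2 (Or.inl hx)

theorem extendPart_inter_Icc (hγ : γ ⊆ I[n]) : extendPart n β γ ∩ I[n] = γ := by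
  ext x
  simp only [mem_inter, mem_extendPart]
  constructor
  · rintro ⟨hx | ⟨-, rfl⟩ | ⟨-, rfl⟩, hxI⟩
    · exact hx
    · exact absurd hxI succ_notMem_Icc
    · exact absurd hxI neg_succ_notMem_Icc
  · exact fun hx => ⟨Or.inl hx, hγ hx⟩

theorem neg_extendPart : -extendPart n β γ = extendPart n β (-γ) := by
  ext x
  simp only [mem_neg', mem_extendPart, neg_eq_iff_eq_neg, neg_neg]
  tauto

theorem extendPart_injOn : Set.InjOn (extendPart n β) π.parts := fun γ hγ δ hδ h => by
  rw [← extendPart_inter_Icc (β := β) (π.le hγ), h, extendPart_inter_Icc (π.le hδ)]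

noncomputable def extendIntoPart (π : Finpartition I[n]) (hπ : ∀ γ ∈ π.parts, -γ ∈ π.parts)
    (hβ : β ∈ π.parts) : Finpartition I[n + 1] where
  parts := π.parts.image (extendPart n β)
  supIndep := by
    rw [supIndep_iff_pairwiseDisjoint]
    intro _ ha _ hb hne
    obtain ⟨γ, hγ, rfl⟩ := mem_image.1 ha
    obtain ⟨δ, hδ, rfl⟩ := mem_image.1 hb
    have hγδ : γ ≠ δ := fun h => hne (h ▸ rfl)
    refine disjoint_left.2 fun x hxγ hxδ => ?_
    rw [id, mem_extendPart] at hxγ hxδ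
    rcases hxγ with hx | ⟨rfl, rfl⟩ | ⟨rfl, rfl⟩
    · rcases hxδ with hx' | ⟨-, rfl⟩ | ⟨-, rfl⟩
      · exact disjoint_left.1 (π.disjoint hγ hδ hγδ) hx hx'
      · exact succ_notMem_Icc (π.le hγ hx)
      · exact neg_succ_notMem_Icc (π.le hγ hx)
    · rcases hxδ with hx' | ⟨rfl, -⟩ | ⟨-, h⟩
      · exact succ_notMem_Icc (π.le hδ hx')
      · exact hγδ rfl
      · omega
    · rcases hxδ with hx' | ⟨-, h⟩ | ⟨rfl, -⟩
      · exact neg_succ_notMem_Icc (π.le hδ hx')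
      · omega
      · exact hγδ rfl
  sup_parts := by
    ext x
    simp only [sup_image, mem_sup, Function.comp_apply, id_eq, mem_Icc_succ, mem_extendPart]
    constructor
    · rintro ⟨γ, hγ, hx | ⟨-, rfl⟩ | ⟨-, rfl⟩⟩
      exacts [Or.inl (π.le hγ hx), Or.inr (Or.inl rfl), Or.inr (Or.inr rfl)]
    · rintro (hx | rfl | rfl)
      · obtain ⟨γ, hγ, hxγ⟩ := π.exists_mem hx
        exact ⟨γ, hγ, Or.inl hxγ⟩
      · exact ⟨β, hβ, Or.inr (Or.inl ⟨rfl, rfl⟩)⟩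
      · exact ⟨-β, hπ β hβ, Or.inr (Or.inr ⟨rfl, rfl⟩)⟩
  bot_notMem := by
    intro h
    obtain ⟨γ, hγ, h⟩ := mem_image.1 h
    exact π.ne_bot hγ (le_bot_iff.1 (h ▸ subset_extendPart))

theorem extendIntoPart_parts (hπ : ∀ γ ∈ π.parts, -γ ∈ π.parts) (hβ : β ∈ π.parts) :
    (extendIntoPart π hπ hβ).parts = π.parts.image (extendPart n β) := rfl

theorem isBPartition_extendBySingletons (hπ : IsBPartition π) :
    IsBPartition (extendBySingletons π) := by
  obtain ⟨hneg, hzero⟩ := isBPartition_iff.1 hπ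
  have hne : ({(n + 1 : ℤ)} : Finset ℤ) ≠ {-(n + 1 : ℤ)} := by rw [Ne, singleton_inj]; omega
  rw [isBPartition_iff, extendBySingletons_parts]
  simp only [forall_mem_insert, neg_singleton, neg_neg]
  exact ⟨⟨by simp, by simp, fun γ hγ => mem_insert_of_mem (mem_insert_of_mem (hneg γ hγ))⟩,
    fun h => absurd h hne, fun h => absurd h.symm hne, hzero⟩

theorem isBPartition_extendIntoPart (hπ : IsBPartition π) (hβ : β ∈ π.parts) :
    IsBPartition (extendIntoPart π (fun _ => hπ.neg_mem) hβ) := by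
  obtain ⟨hneg, hzero⟩ := isBPartition_iff.1 hπ
  rw [isBPartition_iff, extendIntoPart_parts]
  simp only [forall_mem_image, neg_extendPart]
  refine ⟨fun γ hγ => mem_image_of_mem _ (hneg γ hγ), fun γ hγ hsymm => ?_⟩
  exact subset_extendPart (hzero γ hγ (extendPart_injOn (hneg γ hγ) hγ hsymm))

theorem weight_extendBySingletons (π : Finpartition I[n]) :
    weight (extendBySingletons π) = X 0 ^ 2 * weight π := by
  have hnotMem : ∀ s : ℤ, s ∉ I[n] → {s} ∉ π.parts := fun s hs h =>
    hs (π.le h (mem_singleton_self s))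
  rw [weight, extendBySingletons_parts, prod_insert, prod_insert (hnotMem _ succ_notMem_Icc),
    blockVar_singleton_of_nonpos (by omega), blockVar_singleton_of_pos (by omega), weight, sq,
    mul_assoc]
  rw [mem_insert, not_or, singleton_inj]
  exact ⟨by omega, hnotMem _ neg_succ_notMem_Icc⟩

theorem blockVar_extendPart_of_ne (hγ : γ ⊆ I[n]) (h : γ ≠ β) :
    blockVar (extendPart n β γ) = blockVar γ := by
  by_cases h' : γ = -β
  · rw [extendPart, if_pos h', if_neg h, id]
    exact blockVar_insert_neg (by omega) fun x hx => (abs_lt_of_mem_Icc (hγ hx)).le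
  · rw [extendPart_of_ne h h']

theorem blockVar_extendPart_self (D : Derivation ℚ URing URing) (hD : ∀ l, D (X l) = X (l + 1))
    (hβ : β ⊆ I[n]) (hne : β.Nonempty) :
    blockVar (extendPart n β β) = D (blockVar β) := by
  have hlt : ∀ x ∈ β, |x| < n + 1 := fun x hx => abs_lt_of_mem_Icc (hβ hx)
  have hins := blockVar_insert_of_lt D hD hne hlt
  rw [extendPart, if_pos rfl]
  split_ifs
  · rw [← hins]
    refine blockVar_insert_neg (by omega) fun x hx => ?_
    rcases mem_insert.1 hx with rfl | hx
    exacts [(abs_of_pos (by omega)).le, (hlt x hx).le]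
  · exact hins

theorem weight_extendIntoPart (D : Derivation ℚ URing URing) (hD : ∀ l, D (X l) = X (l + 1))
    (hπ : ∀ γ ∈ π.parts, -γ ∈ π.parts) (hβ : β ∈ π.parts) :
    weight (extendIntoPart π hπ hβ) = (∏ γ ∈ π.parts.erase β, blockVar γ) * D (blockVar β) := by
  rw [weight, extendIntoPart_parts, prod_image extendPart_injOn, ← mul_prod_erase _ _ hβ,
    mul_comm, blockVar_extendPart_self D hD (π.le hβ) (π.nonempty_of_mem_parts hβ)]
  congr 1
  refine prod_congr rfl fun γ hγ => ?_
  exact blockVar_extendPart_of_ne (π.le (mem_of_mem_erase hγ)) (ne_of_mem_erase hγ)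

end Extension

section Restriction

variable {n : ℕ} {σ : Finpartition I[n + 1]} {d : Finset ℤ}

theorem isBPartition_restrict (hσ : IsBPartition σ) :
    IsBPartition (σ.restrict Icc_subset_Icc_succ) := by
  obtain ⟨hneg, hzero⟩ := isBPartition_iff.1 hσ
  rw [isBPartition_iff]
  simp only [σ.mem_restrict_parts, and_imp, forall_exists_index]
  constructor
  · rintro _ hne d hd rfl
    exact ⟨hne.neg, -d, hneg d hd, by rw [neg_inter, neg_Icc]⟩
  · rintro _ hne d hd rfl hsymm
    rw [neg_inter, neg_Icc] at hsymm
    have hd' : -d = d := (σ.inter_eq_inter_iff (hneg d hd) hd hne).1 hsymm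
    exact mem_inter.2 ⟨hzero d hd hd', by simp⟩

theorem restrict_extendBySingletons (π : Finpartition I[n]) :
    (extendBySingletons π).restrict Icc_subset_Icc_succ = π := by
  ext c
  simp only [Finpartition.mem_restrict_parts, extendBySingletons_parts, exists_mem_insert]
  rw [inter_comm, inter_singleton_of_notMem neg_succ_notMem_Icc, inter_comm,
    inter_singleton_of_notMem succ_notMem_Icc]
  constructor
  · rintro ⟨hne, rfl | rfl | ⟨d, hd, rfl⟩⟩
    · exact absurd hne (by simp)
    · exact absurd hne (by simp)
    · rwa [inter_eq_left.2 (π.le hd)]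
  · exact fun hc => ⟨π.nonempty_of_mem_parts hc, Or.inr (Or.inr ⟨c, hc, inter_eq_left.2 (π.le hc)⟩)⟩

theorem restrict_extendIntoPart {π : Finpartition I[n]} {β : Finset ℤ}
    (hπ : ∀ γ ∈ π.parts, -γ ∈ π.parts) (hβ : β ∈ π.parts) :
    (extendIntoPart π hπ hβ).restrict Icc_subset_Icc_succ = π := by
  ext c
  simp only [Finpartition.mem_restrict_parts, extendIntoPart_parts, exists_mem_image]
  constructor
  · rintro ⟨-, γ, hγ, rfl⟩
    rwa [extendPart_inter_Icc (π.le hγ)]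
  · exact fun hc => ⟨π.nonempty_of_mem_parts hc, c, hc, extendPart_inter_Icc (π.le hc)⟩

theorem succ_mem_part_succ (σ : Finpartition I[n + 1]) : (n + 1 : ℤ) ∈ σ.part (n + 1) :=
  σ.mem_part_self.2 (mem_Icc_succ.2 (Or.inr (Or.inl rfl)))

theorem part_succ_mem (σ : Finpartition I[n + 1]) : σ.part (n + 1) ∈ σ.parts :=
  σ.part_mem.2 (mem_Icc_succ.2 (Or.inr (Or.inl rfl)))

theorem mem_block_iff (hneg : ∀ d ∈ σ.parts, -d ∈ σ.parts) (hd : d ∈ σ.parts) {x : ℤ} :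
    x ∈ d ↔ x ∈ d ∩ I[n] ∨ (d = σ.part (n + 1) ∧ x = n + 1) ∨
      (d = -σ.part (n + 1) ∧ x = -(n + 1)) := by
  constructor
  · intro hx
    rcases mem_Icc_succ.1 (σ.le hd hx) with hxI | rfl | rfl
    · exact Or.inl (mem_inter.2 ⟨hx, hxI⟩)
    · exact Or.inr (Or.inl ⟨(σ.part_eq_of_mem hd hx).symm, rfl⟩)
    · refine Or.inr (Or.inr ⟨?_, rfl⟩)
      rw [σ.part_eq_of_mem (hneg d hd) (by simpa using hx), neg_neg]
  · rintro (hx | ⟨rfl, rfl⟩ | ⟨rfl, rfl⟩)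
    · exact (mem_inter.1 hx).1
    · exact succ_mem_part_succ σ
    · simpa using succ_mem_part_succ σ

theorem inter_Icc_eq_self (hneg : ∀ d ∈ σ.parts, -d ∈ σ.parts) (hd : d ∈ σ.parts)
    (h : d ≠ σ.part (n + 1)) (h' : d ≠ -σ.part (n + 1)) : d ∩ I[n] = d := by
  ext x
  rw [mem_block_iff hneg hd (x := x)]
  simp [h, h']

theorem extendBySingletons_restrict (hσ : IsBPartition σ) (ht : σ.part (n + 1) = {(n + 1 : ℤ)}) :
    extendBySingletons (σ.restrict Icc_subset_Icc_succ) = σ := by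
  have hneg : ∀ d ∈ σ.parts, -d ∈ σ.parts := fun _ => hσ.neg_mem
  have htσ : {(n + 1 : ℤ)} ∈ σ.parts := ht ▸ part_succ_mem σ
  have hmtσ : {-(n + 1 : ℤ)} ∈ σ.parts := by simpa using hneg _ htσ
  ext d
  simp only [extendBySingletons_parts, mem_insert, Finpartition.mem_restrict_parts]
  constructor
  · rintro (rfl | rfl | ⟨hne, e, he, rfl⟩)
    · exact hmtσ
    · exact htσ
    · rwa [inter_Icc_eq_self hneg he (by rintro rfl; simp [ht] at hne)
        (by rintro rfl; simp [ht] at hne)]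
  · intro hd
    by_cases h : d = σ.part (n + 1)
    · exact Or.inr (Or.inl (h.trans ht))
    by_cases h' : d = -σ.part (n + 1)
    · exact Or.inl (by simpa [ht] using h')
    · exact Or.inr (Or.inr ⟨σ.nonempty_of_mem_parts hd, d, hd, inter_Icc_eq_self hneg hd h h'⟩)

theorem part_succ_inter_Icc_nonempty (hσ : IsBPartition σ)
    (ht : σ.part (n + 1) ≠ {(n + 1 : ℤ)}) : (σ.part (n + 1) ∩ I[n]).Nonempty := by
  obtain ⟨hneg, hzero⟩ := isBPartition_iff.1 hσ
  obtain ⟨y, hy, hyt⟩ : ∃ y ∈ σ.part (n + 1), y ≠ n + 1 := by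
    by_contra! h
    exact ht (eq_singleton_iff_unique_mem.2 ⟨succ_mem_part_succ σ, h⟩)
  rcases (mem_block_iff hneg (part_succ_mem σ)).1 hy with hyI | ⟨-, rfl⟩ | ⟨hsymm, -⟩
  · exact ⟨y, hyI⟩
  · exact absurd rfl hyt
  · exact ⟨0, mem_inter.2 ⟨hzero _ (part_succ_mem σ) hsymm.symm, by simp⟩⟩

theorem extendIntoPart_restrict (hσ : IsBPartition σ) (ht : σ.part (n + 1) ≠ {(n + 1 : ℤ)}) :
    ∃ hβ : σ.part (n + 1) ∩ I[n] ∈ (σ.restrict Icc_subset_Icc_succ).parts,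
      extendIntoPart _ (fun _ => (isBPartition_restrict hσ).neg_mem) hβ = σ := by
  have hneg : ∀ d ∈ σ.parts, -d ∈ σ.parts := fun _ => hσ.neg_mem
  set δ := σ.part (n + 1)
  have hδ : δ ∈ σ.parts := part_succ_mem σ
  have hne : (δ ∩ I[n]).Nonempty := part_succ_inter_Icc_nonempty hσ ht
  have hneg_inter : -δ ∩ I[n] = -(δ ∩ I[n]) := by rw [neg_inter, neg_Icc]
  have hne' : (-δ ∩ I[n]).Nonempty := hneg_inter ▸ hne.neg
  have hextend : ∀ d ∈ σ.parts, extendPart n (δ ∩ I[n]) (d ∩ I[n]) = d := fun d hd => by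
    ext x
    rw [mem_extendPart, mem_block_iff hneg hd (x := x), σ.inter_eq_inter_iff hd hδ hne,
      ← hneg_inter, σ.inter_eq_inter_iff hd (hneg δ hδ) hne']
  have hmeets : ∀ d ∈ σ.parts, (d ∩ I[n]).Nonempty := fun d hd => by
    obtain ⟨x, hx⟩ := σ.nonempty_of_mem_parts hd
    rcases (mem_block_iff hneg hd).1 hx with hxI | ⟨rfl, -⟩ | ⟨rfl, -⟩
    exacts [⟨x, hxI⟩, hne, hne']
  refine ⟨(σ.mem_restrict_parts _).2 ⟨hne, δ, hδ, rfl⟩, ?_⟩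
  ext d
  simp only [extendIntoPart_parts, mem_image, Finpartition.mem_restrict_parts]
  constructor
  · rintro ⟨_, ⟨-, e, he, rfl⟩, rfl⟩
    rwa [hextend e he]
  · exact fun hd => ⟨d ∩ I[n], ⟨hmeets d hd, d, hd, rfl⟩, hextend d hd⟩

end Restriction

section Bijection

variable {n : ℕ}

noncomputable def extendMap (n : ℕ) : (Σ π : BPartition n, Option π.1.parts) → BPartition (n + 1)
  | ⟨π, none⟩ => ⟨extendBySingletons π.1, isBPartition_extendBySingletons π.2⟩
  | ⟨π, some β⟩ =>
    ⟨extendIntoPart π.1 (fun _ => π.2.neg_mem) β.2, isBPartition_extendIntoPart π.2 β.2⟩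

theorem restrict_extendMap (p : Σ π : BPartition n, Option π.1.parts) :
    (extendMap n p).1.restrict Icc_subset_Icc_succ = p.1.1 := by
  obtain ⟨π, _ | β⟩ := p
  exacts [restrict_extendBySingletons _, restrict_extendIntoPart (fun _ => π.2.neg_mem) β.2]

theorem part_succ_extendMap_inter_Icc (π : BPartition n) (o : Option π.1.parts) :
    (extendMap n ⟨π, o⟩).1.part (n + 1) ∩ I[n] = o.elim ∅ Subtype.val := by
  rcases o with _ | ⟨β, hβ⟩
  · rw [extendMap, Finpartition.part_eq_of_mem _ (mem_insert_of_mem (mem_insert_self _ _))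
      (mem_singleton_self _), singleton_inter_of_notMem succ_notMem_Icc]
    rfl
  · rw [extendMap, Finpartition.part_eq_of_mem _ (mem_image_of_mem _ hβ)
      (mem_extendPart.2 (Or.inr (Or.inl ⟨rfl, rfl⟩))), extendPart_inter_Icc (π.1.le hβ)]
    rfl

theorem extendMap_injective (n : ℕ) : Function.Injective (extendMap n) := by
  rintro ⟨π, o⟩ ⟨π', o'⟩ h
  obtain rfl : π = π' := Subtype.ext <| by
    rw [← restrict_extendMap ⟨π, o⟩, h, restrict_extendMap]
  have hcore := congrArg (fun σ : BPartition (n + 1) => σ.1.part (n + 1) ∩ I[n]) h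
  simp only [part_succ_extendMap_inter_Icc] at hcore
  congr 1
  rcases o with _ | ⟨β, hβ⟩ <;> rcases o' with _ | ⟨β', hβ'⟩
  · rfl
  · exact absurd hcore.symm (π.1.ne_bot hβ')
  · exact absurd hcore (π.1.ne_bot hβ)
  · exact congrArg some (Subtype.ext hcore)

theorem extendMap_surjective (n : ℕ) : Function.Surjective (extendMap n) := by
  rintro ⟨σ, hσ⟩
  let π : BPartition n := ⟨_, isBPartition_restrict hσ⟩
  by_cases ht : σ.part (n + 1) = {(n + 1 : ℤ)}
  · exact ⟨⟨π, none⟩, Subtype.ext (extendBySingletons_restrict hσ ht)⟩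
  · obtain ⟨hβ, h⟩ := extendIntoPart_restrict hσ ht
    exact ⟨⟨π, some ⟨_, hβ⟩⟩, Subtype.ext h⟩

theorem extendMap_bijective (n : ℕ) : Function.Bijective (extendMap n) :=
  ⟨extendMap_injective n, extendMap_surjective n⟩

theorem sum_weight_extendMap (D : Derivation ℚ URing URing) (hD : ∀ l, D (X l) = X (l + 1))
    (π : BPartition n) :
    ∑ o, weight (extendMap n ⟨π, o⟩).1 = D (weight π.1) + X 0 ^ 2 * weight π.1 := by
  rw [Fintype.sum_option, add_comm]
  simp only [extendMap, weight_extendBySingletons, weight_extendIntoPart D hD]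
  rw [sum_coe_sort π.1.parts fun β => (∏ γ ∈ π.1.parts.erase β, blockVar γ) * D (blockVar β),
    weight, D.leibniz_finset_prod]
  simp only [smul_eq_mul]

end Bijection

theorem aPoly_zero : aPoly 0 = X 0 := by
  have hI : I[0] = {0} := by simp
  have hatom : IsAtom I[0] := hI ▸ isAtom_singleton 0
  -- `IsAtom.uniqueFinpartition` takes a spurious implicit partition `P`.
  let := hatom.uniqueFinpartition (P := Finpartition.indiscrete hatom.1)
  have hB : IsBPartition (Finpartition.indiscrete hatom.1) := by
    simp [isBPartition_iff]
  rw [aPoly_eq_sum, Fintype.sum_subsingleton _ ⟨_, hB⟩, weight, Finpartition.indiscrete_parts,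
    prod_singleton, hI, blockVar_singleton_of_nonpos le_rfl]

/-- `a_0 = u₀` and `a_{n+1} = D(a_n) + u₀² · a_n` for all `n ≥ 0`, where `D` is the
derivation with `D(u_l) = u_{l+1}`. -/
theorem aPoly_recurrence (D : Derivation ℚ URing URing)
    (hD : ∀ l : ℕ, D (X l) = X (l + 1)) :
    aPoly 0 = X 0 ∧ ∀ n : ℕ, aPoly (n + 1) = D (aPoly n) + X 0 ^ 2 * aPoly n := by
  refine ⟨aPoly_zero, fun n => ?_⟩
  rw [aPoly_eq_sum, aPoly_eq_sum, ← (extendMap_bijective n).sum_comp, Fintype.sum_sigma,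
    map_sum, mul_sum, ← sum_add_distrib]
  exact sum_congr rfl fun π _ => sum_weight_extendMap D hD π
end

section
/- Let (R, D) be a commutative ring with a derivation D and let u ∈ R. Define a_0 = u and a_{n+1} = D(a_n) + u^2·a_n for n ≥ 0, and set c_n = Σ_{i+j=n} (−1)^j a_i·a_j. Then c_n = 0 for all odd n, and for every m ≥ 0: D(c_{2m}) + 2u^2·c_{2m} = 2u·a_{2m+1}. -/
open Finset

/-- Let `(R, D)` be a commutative ring with a derivation `D`, `u ∈ R`, and define
`a_0 = u`, `a_{n+1} = D(a_n) + u²·a_n`, and `c_n = Σ_{i+j=n} (−1)^j a_i·a_j`.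
Then `c_n = 0` for odd `n`, and `D(c_{2m}) + 2u²·c_{2m} = 2u·a_{2m+1}` for every
`m ≥ 0`. -/
theorem ibragimov_shabat_identity (R : Type*) [CommRing R] (D : Derivation ℤ R R)
    (u : R) (a c : ℕ → R)
    (ha0 : a 0 = u) (ha : ∀ n : ℕ, a (n + 1) = D (a n) + u ^ 2 * a n)
    (hc : ∀ n : ℕ, c n = ∑ i ∈ Finset.range (n + 1), (-1 : R) ^ (n - i) * (a i * a (n - i))) :
    (∀ n : ℕ, Odd n → c n = 0) ∧
    (∀ m : ℕ, D (c (2 * m)) + 2 * u ^ 2 * c (2 * m) = 2 * u * a (2 * m + 1)) := by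
  have hD : ∀ k, D (a k) = a (k + 1) - u ^ 2 * a k := by
    intro k; rw [ha]; ring
  have key : ∀ n : ℕ, D (c n) + 2 * u ^ 2 * c n = (1 + (-1 : R) ^ n) * (u * a (n + 1)) := by
    intro n
    set T : ℕ → R := fun j => (-1 : R) ^ (n + 1 - j) * (a j * a (n + 1 - j)) with hT
    have e1 : D (c n) + 2 * u ^ 2 * c n
        = ∑ i ∈ range (n + 1), (T (i + 1) + -T i) := by
      rw [hc, map_sum, mul_sum, ← sum_add_distrib]
      refine sum_congr rfl fun i hi => ?_
      have hi' : i ≤ n := Nat.lt_succ_iff.mp (mem_range.mp hi)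
      have h1 : n + 1 - (i + 1) = n - i := by omega
      have h2 : n + 1 - i = (n - i) + 1 := by omega
      have hDt : D ((-1 : R) ^ (n - i) * (a i * a (n - i)))
          = (-1 : R) ^ (n - i) * (D (a i) * a (n - i) + a i * D (a (n - i))) := by
        rcases Nat.even_or_odd (n - i) with h | h
        · simp only [h.neg_one_pow, one_mul, Derivation.leibniz, smul_eq_mul]; ring
        · simp only [h.neg_one_pow, Derivation.leibniz, smul_eq_mul, map_neg,
            Derivation.map_one_eq_zero, neg_zero, mul_zero, add_zero, neg_smul, one_smul]
          ring
      rw [hDt, hD, hD, hT]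
      simp only [h1, h2]
      rw [pow_succ]
      ring
    rw [e1, sum_add_distrib]
    have e3 : (∑ i ∈ range (n + 1), -T i) = -∑ i ∈ range (n + 1), T i := by
      simp
    rw [e3]
    have h1 := Finset.sum_range_succ' T (n + 1)
    have h2 := Finset.sum_range_succ T (n + 1)
    have hT0 : T 0 = -((-1 : R) ^ n * (u * a (n + 1))) := by
      simp only [hT, Nat.sub_zero, ha0, pow_succ]; ring
    have hTn : T (n + 1) = u * a (n + 1) := by
      simp only [hT, Nat.sub_self, pow_zero, ha0]; ring
    linear_combination h2 - h1 - hT0 + hTn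
  constructor
  · intro n hn
    rw [hc]
    refine Finset.sum_involution (fun i _ => n - i) ?_ ?_ ?_ ?_
    · intro i hi
      have hi' : i ≤ n := Nat.lt_succ_iff.mp (mem_range.mp hi)
      show (-1 : R) ^ (n - i) * (a i * a (n - i))
          + (-1 : R) ^ (n - (n - i)) * (a (n - i) * a (n - (n - i))) = 0
      have h1 : n - (n - i) = i := by omega
      rw [h1]
      have hmul : (-1 : R) ^ (n - i) * (-1 : R) ^ i = -1 := by
        rw [← pow_add]
        have h2 : n - i + i = n := by omega
        rw [h2, hn.neg_one_pow]
      have hsq : (-1 : R) ^ i * (-1 : R) ^ i = 1 := by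
        rw [← pow_add, Even.neg_one_pow ⟨i, rfl⟩]
      have h3 : (-1 : R) ^ (n - i) = -(-1 : R) ^ i := by
        calc (-1 : R) ^ (n - i) = (-1 : R) ^ (n - i) * ((-1 : R) ^ i * (-1 : R) ^ i) := by
              rw [hsq, mul_one]
          _ = -(-1 : R) ^ i := by rw [← mul_assoc, hmul]; ring
      rw [h3]; ring
    · intro i hi _
      show n - i ≠ i
      obtain ⟨k, hk⟩ := hn
      have hi' : i ≤ n := Nat.lt_succ_iff.mp (mem_range.mp hi)
      omega
    · intro i hi
      have hi' : i ≤ n := Nat.lt_succ_iff.mp (mem_range.mp hi)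
      show n - i ∈ range (n + 1)
      exact mem_range.mpr (by omega)
    · intro i hi
      have hi' : i ≤ n := Nat.lt_succ_iff.mp (mem_range.mp hi)
      show n - (n - i) = i
      omega
  · intro m
    rw [key (2 * m), Even.neg_one_pow ⟨m, by ring⟩]
    ring
end

section
/- Let B*_n be the number of non-overlapping set partitions of [n] and B̃*_n the number of non-overlapping set partitions of [n] with no singletons (B*_0 = B̃*_0 = 1, counting the empty partition). Then for all n ≥ 0: B*_n = Σ_{j=0}^{n} C(n,j)·B̃*_{n−j}, and B̃*_{n+1} = Σ_{j=0}^{n−1} B̃*_j·B*_{n−1−j}. -/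
open Finset

/-- Blocks `α`, `β` overlap if `min α < min β < max α < max β`. -/
def Overlaps {n : ℕ} (α β : Finset (Fin n)) : Prop :=
  ∃ hα : α.Nonempty, ∃ hβ : β.Nonempty,
    α.min' hα < β.min' hβ ∧ β.min' hβ < α.max' hα ∧ α.max' hα < β.max' hβ

/-- A set partition is non-overlapping if no two of its blocks overlap. -/
def IsNonOverlapping {n : ℕ} (π : Finpartition (Finset.univ : Finset (Fin n))) : Prop :=
  ∀ α ∈ π.parts, ∀ β ∈ π.parts, ¬ Overlaps α β

/-- The Bessel number `B*_n`: the number of non-overlapping set partitions of `[n]`. -/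
noncomputable def besselB (n : ℕ) : ℕ :=
  Nat.card {π : Finpartition (Finset.univ : Finset (Fin n)) // IsNonOverlapping π}

/-- The 2-associated Bessel number `B̃*_n`: the number of non-overlapping set
partitions of `[n]` with no singletons. -/
noncomputable def besselBt (n : ℕ) : ℕ :=
  Nat.card {π : Finpartition (Finset.univ : Finset (Fin n)) //
    IsNonOverlapping π ∧ ∀ β ∈ π.parts, 2 ≤ β.card}

/-!
Relabelling along order embeddings shows that the number of non-overlapping partitions of a finite
linearly ordered set, with or without the ban on singletons, depends only on its size.

Deleting the singleton blocks of a non-overlapping partition leaves a singleton-free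
non-overlapping partition of the complement of the set `S` of its singletons, and every such
partition glues back with the singletons of `S`; summing over `S` gives the first recurrence.

For the second, the block of `0` in a singleton-free non-overlapping partition of `{0, …, n}` has
the form `{0, m} ∪ S` with `S ⊆ (0, m)`. Non-overlap forces every other block into `(0, m) \ S` or
into `(m, n]`, so the partition amounts to a pair of independent singleton-free non-overlapping
partitions of these two sets. For fixed `m`, summing over `S` collapses by the first recurrence to
`B*_{m-1} · B̃*_{n-m}`.
-/

variable {α β : Type*}

theorem Nat.card_subtype_eq_sum_card_fiberwise {X ι : Type*} [Finite X] {p : X → Prop}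
    {f : X → ι} {t : Finset ι} (hf : ∀ x, p x → f x ∈ t) :
    Nat.card {x // p x} = ∑ i ∈ t, Nat.card {x // p x ∧ f x = i} := by
  classical
  have := Fintype.ofFinite X
  simp only [Nat.card_eq_fintype_card, Fintype.card_subtype]
  rw [card_eq_sum_card_fiberwise (f := f) (t := t) fun x hx ↦ hf x (mem_filter.1 hx).2]
  simp only [filter_filter]

namespace Finset

variable [LinearOrder α] {A B : Finset α}

/-- `Overlaps` for an arbitrary linear order; on `Fin n` the two agree definitionally. -/
def Overlap (A B : Finset α) : Prop :=
  ∃ hA : A.Nonempty, ∃ hB : B.Nonempty,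
    A.min' hA < B.min' hB ∧ B.min' hB < A.max' hA ∧ A.max' hA < B.max' hB

theorem overlap_map_iff [LinearOrder β] (f : α ↪o β) :
    (A.map f.toEmbedding).Overlap (B.map f.toEmbedding) ↔ A.Overlap B := by
  simp only [Overlap, map_eq_image, image_nonempty, RelEmbedding.coe_toEmbedding,
    min'_image f.monotone, max'_image f.monotone, f.lt_iff_lt]

theorem overlap_of_lt {a m b c : α} (ha : a ∈ A) (hm : m ∈ A) (hA : ∀ x ∈ A, a ≤ x ∧ x ≤ m)
    (hb : b ∈ B) (hc : c ∈ B) (hB : ∀ x ∈ B, b ≤ x) (hab : a < b) (hbm : b < m) (hmc : m < c) :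
    A.Overlap B := by
  have hminA : A.min' ⟨a, ha⟩ = a := (min'_eq_iff _ _ _).2 ⟨ha, fun x hx ↦ (hA x hx).1⟩
  have hmaxA : A.max' ⟨a, ha⟩ = m := (max'_eq_iff _ _ _).2 ⟨hm, fun x hx ↦ (hA x hx).2⟩
  have hminB : B.min' ⟨b, hb⟩ = b := (min'_eq_iff _ _ _).2 ⟨hb, hB⟩
  refine ⟨⟨a, ha⟩, ⟨b, hb⟩, ?_, ?_, ?_⟩
  · rwa [hminA, hminB]
  · rwa [hminB, hmaxA]
  · rw [hmaxA]
    exact hmc.trans_le (B.le_max' c hc)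

theorem not_overlap_self : ¬ A.Overlap A :=
  fun ⟨_, _, h, _⟩ ↦ h.false

theorem not_overlap_singleton (a : α) : ¬ ({a} : Finset α).Overlap B ∧ ¬ B.Overlap {a} := by
  constructor <;> rintro ⟨_, _, h₁, h₂, h₃⟩ <;> simp only [min'_singleton, max'_singleton] at * <;>
    order

theorem not_overlap_of_forall_lt (h : ∀ a ∈ A, ∀ b ∈ B, a < b) :
    ¬ A.Overlap B ∧ ¬ B.Overlap A := by
  constructor
  · rintro ⟨hA, hB, -, h₂, -⟩
    exact (h _ (A.max'_mem hA) _ (B.min'_mem hB)).not_gt h₂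
  · rintro ⟨hB, hA, h₁, -, -⟩
    exact (h _ (A.min'_mem hA) _ (B.min'_mem hB)).not_gt h₁

theorem not_overlap_of_forall_mem_Icc {a b : α} (ha : a ∈ A) (hb : b ∈ A)
    (hB : ∀ x ∈ B, a ≤ x ∧ x ≤ b) : ¬ A.Overlap B ∧ ¬ B.Overlap A := by
  constructor
  · rintro ⟨hA, hB', -, -, h₃⟩
    exact h₃.not_ge ((hB _ (B.max'_mem hB')).2.trans (A.le_max' b hb))
  · rintro ⟨hB', hA, h₁, -, -⟩
    exact h₁.not_ge ((A.min'_le a ha).trans (hB _ (B.min'_mem hB')).1)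

end Finset

namespace Finpartition

def NonOverlapping [LinearOrder α] {s : Finset α} (P : Finpartition s) : Prop :=
  ∀ A ∈ P.parts, ∀ B ∈ P.parts, ¬ A.Overlap B

theorem NonOverlapping.of_parts_subset [LinearOrder α] {s t : Finset α} {P : Finpartition s}
    {Q : Finpartition t} (hQ : Q.NonOverlapping) (h : P.parts ⊆ Q.parts) : P.NonOverlapping :=
  fun A hA B hB ↦ hQ A (h hA) B (h hB)

def NoSingletons [DecidableEq α] {s : Finset α} (P : Finpartition s) : Prop :=
  ∀ B ∈ P.parts, 2 ≤ #B

section Map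

variable [DecidableEq α] [DecidableEq β] {s : Finset α}

@[simps]
def finsetMap (f : α ↪ β) (P : Finpartition s) : Finpartition (s.map f) where
  parts := P.parts.map (mapEmbedding f).toEmbedding
  supIndep := by
    rw [supIndep_iff_pairwiseDisjoint, coe_map]
    rintro _ ⟨A, hA, rfl⟩ _ ⟨B, hB, rfl⟩ hAB
    exact (disjoint_map f).2 (P.disjoint hA hB (ne_of_apply_ne (Finset.map f) hAB))
  sup_parts := by
    ext y
    simp only [sup_map, RelEmbedding.coe_toEmbedding, CompTriple.comp_eq, mem_sup,
      mapEmbedding_apply, mem_map]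
    constructor
    · rintro ⟨A, hA, x, hx, rfl⟩
      exact ⟨x, P.subset hA hx, rfl⟩
    · rintro ⟨x, hx, rfl⟩
      obtain ⟨A, hA, hxA⟩ := P.exists_mem hx
      exact ⟨A, hA, x, hxA, rfl⟩
  bot_notMem := by
    simp only [bot_eq_empty, mem_map, RelEmbedding.coe_toEmbedding, mapEmbedding_apply,
      map_eq_empty, not_exists, not_and]
    rintro A hA rfl
    exact P.empty_notMem_parts hA

@[simps]
noncomputable def finsetComap (f : α ↪ β) (Q : Finpartition (s.map f)) : Finpartition s where
  parts := Q.parts.image fun B ↦ B.preimage f f.injective.injOn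
  supIndep := by
    rw [supIndep_iff_pairwiseDisjoint, coe_image]
    rintro _ ⟨A, hA, rfl⟩ _ ⟨B, hB, rfl⟩ hAB
    exact disjoint_preimage (hs := f.injective.injOn) (ht := f.injective.injOn)
      (Q.disjoint hA hB fun h ↦ hAB (h ▸ rfl))
  sup_parts := by
    ext x
    simp only [mem_sup, mem_image, id, exists_exists_and_eq_and, mem_preimage]
    constructor
    · rintro ⟨B, hB, hxB⟩
      simpa using Q.subset hB hxB
    · intro hx
      exact Q.exists_mem (mem_map_of_mem f hx)
  bot_notMem := by
    simp only [bot_eq_empty, mem_image, not_exists, not_and]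
    intro B hB hB'
    obtain ⟨y, hy⟩ := Q.nonempty_of_mem_parts hB
    obtain ⟨x, -, rfl⟩ := mem_map.1 (Q.subset hB hy)
    simpa [hB'] using (mem_preimage (hf := f.injective.injOn)).2 hy

noncomputable def finsetMapEquiv (f : α ↪ β) : Finpartition s ≃ Finpartition (s.map f) where
  toFun := finsetMap f
  invFun := finsetComap f
  left_inv P := by
    ext B
    rw [finsetComap_parts, finsetMap_parts, map_eq_image, image_image]
    simp [Function.comp_def]
  right_inv Q := by
    ext B
    rw [finsetMap_parts, finsetComap_parts, map_eq_image, image_image,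
      image_congr (g := id), image_id]
    intro B hB
    obtain ⟨A, -, rfl⟩ := subset_map_iff.1 (Q.subset hB)
    simp

end Map

section Relabel

variable [LinearOrder α] [LinearOrder β] {s : Finset α} {P : Finpartition s}

theorem nonOverlapping_finsetMap_iff (f : α ↪o β) :
    (P.finsetMap f.toEmbedding).NonOverlapping ↔ P.NonOverlapping := by
  simp only [NonOverlapping, finsetMap_parts, forall_mem_map, RelEmbedding.coe_toEmbedding,
    mapEmbedding_apply, overlap_map_iff]

theorem noSingletons_finsetMap_iff (f : α ↪ β) :
    (P.finsetMap f).NoSingletons ↔ P.NoSingletons := by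
  simp only [NoSingletons, finsetMap_parts, forall_mem_map, RelEmbedding.coe_toEmbedding,
    mapEmbedding_apply, card_map]

theorem card_nonOverlapping_finsetMap (f : α ↪o β) (s : Finset α) :
    Nat.card {Q : Finpartition (s.map f.toEmbedding) // Q.NonOverlapping} =
      Nat.card {P : Finpartition s // P.NonOverlapping} :=
  Nat.card_congr ((finsetMapEquiv f.toEmbedding).subtypeEquiv
    fun _ ↦ (nonOverlapping_finsetMap_iff f).symm).symm

theorem card_nonOverlapping_noSingletons_finsetMap (f : α ↪o β) (s : Finset α) :
    Nat.card {Q : Finpartition (s.map f.toEmbedding) // Q.NonOverlapping ∧ Q.NoSingletons} =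
      Nat.card {P : Finpartition s // P.NonOverlapping ∧ P.NoSingletons} :=
  Nat.card_congr ((finsetMapEquiv f.toEmbedding).subtypeEquiv fun _ ↦
    (and_congr (nonOverlapping_finsetMap_iff f) (noSingletons_finsetMap_iff _)).symm).symm

theorem card_nonOverlapping (s : Finset α) :
    Nat.card {P : Finpartition s // P.NonOverlapping} = besselB #s := by
  have h := card_nonOverlapping_finsetMap (s.orderEmbOfFin rfl) univ
  rw [map_orderEmbOfFin_univ] at h
  exact h

theorem card_nonOverlapping_noSingletons (s : Finset α) :
    Nat.card {P : Finpartition s // P.NonOverlapping ∧ P.NoSingletons} = besselBt #s := by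
  have h := card_nonOverlapping_noSingletons_finsetMap (s.orderEmbOfFin rfl) univ
  rw [map_orderEmbOfFin_univ] at h
  exact h

end Relabel

section Glue

variable [DecidableEq α] {s t S : Finset α}

@[simps]
def disjUnion (P : Finpartition s) (Q : Finpartition t) (h : Disjoint s t) :
    Finpartition (s ∪ t) where
  parts := P.parts ∪ Q.parts
  supIndep := by
    rw [supIndep_iff_pairwiseDisjoint, coe_union]
    exact P.disjoint.union Q.disjoint fun A hA B hB _ ↦ h.mono (P.le hA) (Q.le hB)
  sup_parts := by rw [sup_union, P.sup_parts, Q.sup_parts]; rfl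
  bot_notMem := by simp only [mem_union, P.bot_notMem, Q.bot_notMem, or_self, not_false_eq_true]

def restrictSaturated (P : Finpartition s) (hts : t ⊆ s) (ht : ∀ x ∈ t, P.part x ⊆ t) :
    Finpartition t :=
  P.ofSubset (filter_subset (· ⊆ t) P.parts) <| by
    ext x
    simp only [mem_sup, mem_filter, id]
    refine ⟨fun ⟨B, ⟨_, hBt⟩, hxB⟩ ↦ hBt hxB, fun hx ↦ ?_⟩
    exact ⟨P.part x, ⟨P.part_mem.2 (hts hx), ht x hx⟩, P.mem_part_self.2 (hts hx)⟩

@[simp]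
theorem restrictSaturated_parts (P : Finpartition s) (hts : t ⊆ s) (ht : ∀ x ∈ t, P.part x ⊆ t) :
    (P.restrictSaturated hts ht).parts = {B ∈ P.parts | B ⊆ t} :=
  rfl

def singletons (P : Finpartition s) : Finset α := {x ∈ s | {x} ∈ P.parts}

theorem part_subset_sdiff_singletons (P : Finpartition s) {x : α} (hx : x ∈ s \ P.singletons) :
    P.part x ⊆ s \ P.singletons := by
  intro y hy
  simp only [singletons, mem_sdiff, mem_filter, not_and] at hx ⊢
  have hys : y ∈ s := P.part_subset x hy
  refine ⟨hys, fun _ hy' ↦ hx.2 hx.1 ?_⟩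
  have hxy : P.part x = {y} := P.eq_of_mem_parts (P.part_mem.2 hx.1) hy' hy (mem_singleton_self y)
  obtain rfl : x = y := mem_singleton.1 (hxy ▸ P.mem_part_self.2 hx.1)
  exact hy'

theorem singletons_subset (P : Finpartition s) : P.singletons ⊆ s :=
  filter_subset _ s

def withoutSingletons (P : Finpartition s) : Finpartition (s \ P.singletons) :=
  P.restrictSaturated sdiff_subset fun _ ↦ P.part_subset_sdiff_singletons

theorem noSingletons_withoutSingletons (P : Finpartition s) : P.withoutSingletons.NoSingletons := by
  intro B hB
  rw [withoutSingletons, restrictSaturated_parts, mem_filter] at hB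
  by_contra h
  obtain ⟨x, rfl⟩ : ∃ x, B = {x} :=
    card_eq_one.1 (by have := (P.nonempty_of_mem_parts hB.1).card_pos; omega)
  have hx := mem_singleton_self x
  exact (mem_sdiff.1 (hB.2 hx)).2 (mem_filter.2 ⟨P.subset hB.1 hx, hB.1⟩)

def addSingletons (hS : S ⊆ s) (Q : Finpartition (s \ S)) : Finpartition s :=
  (Q.disjUnion ⊥ sdiff_disjoint).copy (sdiff_union_of_subset hS)

theorem addSingletons_parts (hS : S ⊆ s) (Q : Finpartition (s \ S)) :
    (addSingletons hS Q).parts = Q.parts ∪ S.map ⟨singleton, singleton_injective⟩ :=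
  rfl

theorem singletons_addSingletons (hS : S ⊆ s) {Q : Finpartition (s \ S)} (hQ : Q.NoSingletons) :
    (addSingletons hS Q).singletons = S := by
  ext x
  simp only [singletons, mem_filter, addSingletons_parts, mem_union, mem_map,
    Function.Embedding.coeFn_mk, singleton_inj, exists_eq_right]
  refine ⟨?_, fun hx ↦ ⟨hS hx, Or.inr hx⟩⟩
  rintro ⟨-, hx | hx⟩
  · simpa using hQ _ hx
  · exact hx

theorem addSingletons_withoutSingletons (P : Finpartition s) :
    addSingletons P.singletons_subset P.withoutSingletons = P := by
  ext B : 2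
  rw [addSingletons_parts, withoutSingletons, restrictSaturated_parts, mem_union, mem_filter,
    mem_map]
  constructor
  · rintro (⟨hB, -⟩ | ⟨x, hx, rfl⟩)
    exacts [hB, (mem_filter.1 hx).2]
  · intro hB
    by_cases hBs : B ⊆ s \ P.singletons
    · exact Or.inl ⟨hB, hBs⟩
    obtain ⟨x, hxB, hx⟩ := not_subset.1 hBs
    have hxS : x ∈ P.singletons := by
      by_contra h
      exact hx (mem_sdiff.2 ⟨P.subset hB hxB, h⟩)
    exact Or.inr ⟨x, hxS, P.eq_of_mem_parts (mem_filter.1 hxS).2 hB (mem_singleton_self x) hxB⟩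

theorem withoutSingletons_addSingletons_parts (hS : S ⊆ s) {Q : Finpartition (s \ S)}
    (hQ : Q.NoSingletons) : (addSingletons hS Q).withoutSingletons.parts = Q.parts := by
  ext B
  rw [withoutSingletons, restrictSaturated_parts, singletons_addSingletons hS hQ, mem_filter,
    addSingletons_parts, mem_union, mem_map]
  refine ⟨?_, fun hB ↦ ⟨Or.inl hB, Q.subset hB⟩⟩
  rintro ⟨hB | ⟨x, hx, rfl⟩, hBS⟩
  · exact hB
  · exact absurd hx (mem_sdiff.1 (hBS (mem_singleton_self x))).2

end Glue

section Order

variable [LinearOrder α] {s t S : Finset α}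

theorem NonOverlapping.disjUnion {P : Finpartition s} {Q : Finpartition t}
    (hP : P.NonOverlapping) (hQ : Q.NonOverlapping)
    (hPQ : ∀ A ∈ P.parts, ∀ B ∈ Q.parts, ¬ A.Overlap B ∧ ¬ B.Overlap A) (h : Disjoint s t) :
    (P.disjUnion Q h).NonOverlapping := by
  simp only [NonOverlapping, disjUnion_parts, mem_union]
  rintro A (hA | hA) B (hB | hB)
  exacts [hP A hA B hB, (hPQ A hA B hB).1, (hPQ B hB A hA).2, hQ A hA B hB]

theorem NonOverlapping.extend {u : Finset α} {P : Finpartition s} (hP : P.NonOverlapping)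
    (hu : u ≠ ∅) (hsu : Disjoint s u) (hst : s ⊔ u = t)
    (hPu : ∀ A ∈ P.parts, ¬ u.Overlap A ∧ ¬ A.Overlap u) :
    (P.extend hu hsu hst).NonOverlapping := by
  simp only [NonOverlapping, extend_parts, mem_insert]
  rintro A (rfl | hA) B (rfl | hB)
  exacts [not_overlap_self, (hPu B hB).1, (hPu A hA).2, hP A hA B hB]

theorem nonOverlapping_bot (s : Finset α) : (⊥ : Finpartition s).NonOverlapping := by
  simp only [NonOverlapping, parts_bot, forall_mem_map, Function.Embedding.coeFn_mk]
  exact fun x _ _ _ ↦ (not_overlap_singleton x).1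

theorem NonOverlapping.addSingletons (hS : S ⊆ s) {Q : Finpartition (s \ S)}
    (hQ : Q.NonOverlapping) : (addSingletons hS Q).NonOverlapping :=
  hQ.disjUnion (nonOverlapping_bot S) (fun _ _ B hB ↦ by
    obtain ⟨x, -, rfl⟩ := mem_map.1 ((parts_bot S) ▸ hB)
    exact (not_overlap_singleton x).symm) sdiff_disjoint

noncomputable def equivOfSingletonsEq (hS : S ⊆ s) :
    {P : Finpartition s // P.NonOverlapping ∧ P.singletons = S} ≃
      {Q : Finpartition (s \ S) // Q.NonOverlapping ∧ Q.NoSingletons} where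
  toFun P := ⟨P.1.withoutSingletons.copy (congrArg (s \ ·) P.2.2),
    P.2.1.of_parts_subset (filter_subset _ _), P.1.noSingletons_withoutSingletons⟩
  invFun Q := ⟨addSingletons hS Q.1, Q.2.1.addSingletons hS, singletons_addSingletons hS Q.2.2⟩
  left_inv P := by
    obtain ⟨P, hP, rfl⟩ := P
    exact Subtype.ext P.addSingletons_withoutSingletons
  right_inv Q := Subtype.ext <| Finpartition.ext <| withoutSingletons_addSingletons_parts hS Q.2.2

theorem card_nonOverlapping_eq_sum (s : Finset α) :
    Nat.card {P : Finpartition s // P.NonOverlapping} =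
      ∑ S ∈ s.powerset,
        Nat.card {Q : Finpartition (s \ S) // Q.NonOverlapping ∧ Q.NoSingletons} := by
  rw [Nat.card_subtype_eq_sum_card_fiberwise (f := singletons) (t := s.powerset)
    fun P _ ↦ mem_powerset.2 (filter_subset _ _)]
  exact sum_congr rfl fun S hS ↦ Nat.card_congr (equivOfSingletonsEq (mem_powerset.1 hS))

theorem NonOverlapping.between_or_above {P : Finpartition s} (hP : P.NonOverlapping)
    {A B : Finset α} {a m : α} (hA : A ∈ P.parts) (hB : B ∈ P.parts) (hAB : A ≠ B) (ha : a ∈ A)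
    (hm : m ∈ A) (hAm : ∀ x ∈ A, x ≤ m) (has : ∀ x ∈ s, a ≤ x) :
    (∀ x ∈ B, a < x ∧ x < m) ∨ ∀ x ∈ B, m < x := by
  have hBne := P.nonempty_of_mem_parts hB
  have hdisj : Disjoint A B := P.disjoint hA hB hAB
  set b := B.min' hBne
  have hb : b ∈ B := B.min'_mem hBne
  have hab : a < b :=
    (has b (P.subset hB hb)).lt_of_ne fun h ↦ disjoint_left.1 hdisj ha (h ▸ hb)
  rcases lt_or_gt_of_ne fun h : b = m ↦ disjoint_left.1 hdisj hm (h ▸ hb) with hbm | hmb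
  · refine Or.inl fun x hx ↦ ⟨hab.trans_le (B.min'_le x hx), ?_⟩
    by_contra! hmx
    have hmx' : m < x := hmx.lt_of_ne fun h ↦ disjoint_left.1 hdisj hm (h ▸ hx)
    exact hP A hA B hB (overlap_of_lt ha hm (fun y hy ↦ ⟨has y (P.subset hA hy), hAm y hy⟩)
      hb hx (fun y hy ↦ B.min'_le y hy) hab hbm hmx')
  · exact Or.inr fun x hx ↦ hmb.trans_le (B.min'_le x hx)

end Order

end Finpartition

open Finpartition

theorem besselB_eq_sum_powerset [LinearOrder α] (s : Finset α) :
    besselB #s = ∑ S ∈ s.powerset, besselBt #(s \ S) := by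
  simp only [← card_nonOverlapping, ← card_nonOverlapping_noSingletons, card_nonOverlapping_eq_sum]

theorem besselB_eq_sum_choose (n : ℕ) :
    besselB n = ∑ j ∈ range (n + 1), n.choose j * besselBt (n - j) := by
  have h := besselB_eq_sum_powerset (range n)
  rw [card_range, sum_congr rfl fun S hS ↦ by
    rw [card_sdiff_of_subset (mem_powerset.1 hS), card_range]] at h
  rw [h, sum_powerset_apply_card fun k ↦ besselBt (n - k), card_range]
  simp only [smul_eq_mul]

namespace Finset

variable {n m : ℕ} {S : Finset ℕ}

theorem le_of_mem_insert_zero_insert (hS : S ⊆ Ioo 0 m) {x : ℕ}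
    (hx : x ∈ insert 0 (insert m S)) : x ≤ m := by
  rcases mem_insert.1 hx with rfl | hx
  · exact Nat.zero_le m
  rcases mem_insert.1 hx with rfl | hx
  exacts [le_rfl, (mem_Ioo.1 (hS hx)).2.le]

theorem mem_iff_mem_insert_zero_insert (hS : S ⊆ Ioo 0 m) {x : ℕ} :
    x ∈ S ↔ x ∈ insert 0 (insert m S) ∧ x ∈ Ioo 0 m := by
  refine ⟨fun hx ↦ ⟨mem_insert_of_mem (mem_insert_of_mem hx), hS hx⟩, fun ⟨hx, hx'⟩ ↦ ?_⟩
  rw [mem_Ioo] at hx'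
  rcases mem_insert.1 hx with rfl | hx
  · omega
  rcases mem_insert.1 hx with rfl | hx
  · omega
  · exact hx

theorem disjoint_Ioo_sdiff_Ioo : Disjoint (Ioo 0 m \ S) (Ioo m (n + 1)) :=
  disjoint_left.2 fun _ hx hx' ↦ by
    have := mem_Ioo.1 (mem_sdiff.1 hx).1
    have := mem_Ioo.1 hx'
    omega

theorem Ioo_sdiff_subset_range (hmn : m ≤ n) : Ioo 0 m \ S ⊆ range (n + 1) := fun x hx ↦ by
  have := mem_Ioo.1 (mem_sdiff.1 hx).1
  exact mem_range.2 (by omega)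

theorem Ioo_subset_range : Ioo m (n + 1) ⊆ range (n + 1) :=
  fun _ hx ↦ mem_range.2 (mem_Ioo.1 hx).2

theorem disjoint_Ioo_sdiff_union_Ioo_insert_zero_insert (hS : S ⊆ Ioo 0 m) :
    Disjoint (Ioo 0 m \ S ∪ Ioo m (n + 1)) (insert 0 (insert m S)) := by
  simp only [disjoint_insert_right, disjoint_union_left, mem_union, mem_sdiff, mem_Ioo]
  refine ⟨by simp, by simp, sdiff_disjoint, disjoint_left.2 fun x hx hxS ↦ ?_⟩
  have := mem_Ioo.1 (hS hxS)
  have := mem_Ioo.1 hx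
  omega

theorem Ioo_sdiff_union_Ioo_sup_insert_zero_insert (hmn : m ≤ n) (hS : S ⊆ Ioo 0 m) :
    (Ioo 0 m \ S ∪ Ioo m (n + 1)) ⊔ insert 0 (insert m S) = range (n + 1) := by
  ext x
  by_cases hx : x ∈ S
  · have := mem_Ioo.1 (hS hx)
    simp only [sup_eq_union, mem_union, mem_insert, mem_range, hx, or_true, true_iff]
    omega
  · simp only [sup_eq_union, mem_union, mem_sdiff, mem_Ioo, mem_insert, mem_range, hx,
      not_false_eq_true, and_true, or_false]
    omega

theorem exists_eq_insert_zero_insert {A : Finset ℕ} (hA : A ⊆ range (n + 1)) (h0 : 0 ∈ A)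
    (h2 : 2 ≤ #A) :
    ∃ x ∈ (Icc 1 n).sigma fun m ↦ (Ioo 0 m).powerset, insert 0 (insert x.1 x.2) = A := by
  have hne : A.Nonempty := ⟨0, h0⟩
  set m := A.max' hne
  obtain ⟨b, hb, hb0⟩ := exists_mem_ne h2 0
  have hm0 : m ≠ 0 := fun h ↦ hb0 (Nat.le_zero.1 (h ▸ A.le_max' b hb))
  refine ⟨⟨m, (A.erase 0).erase m⟩, mem_sigma.2 ⟨mem_Icc.2 ⟨Nat.pos_of_ne_zero hm0, ?_⟩, ?_⟩, ?_⟩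
  · exact Nat.lt_succ_iff.1 (mem_range.1 (hA (A.max'_mem hne)))
  · refine mem_powerset.2 fun x hx ↦ ?_
    simp only [mem_erase] at hx
    exact mem_Ioo.2 ⟨by omega, lt_of_le_of_ne (A.le_max' x hx.2.2) hx.1⟩
  · rw [insert_erase (mem_erase.2 ⟨hm0, A.max'_mem hne⟩), insert_erase h0]

theorem injOn_insert_zero_insert :
    Set.InjOn (fun x : Σ _ : ℕ, Finset ℕ ↦ insert 0 (insert x.1 x.2))
      ((Icc 1 n).sigma fun m ↦ (Ioo 0 m).powerset) := by
  rintro ⟨m, S⟩ hS ⟨m', S'⟩ hS' h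
  simp only [coe_sigma, Set.mem_sigma_iff, coe_Icc, Set.mem_Icc, mem_coe, mem_powerset] at hS hS' h
  obtain rfl : m = m' := le_antisymm
    (le_of_mem_insert_zero_insert hS'.2 (h ▸ mem_insert_of_mem (mem_insert_self m S)))
    (le_of_mem_insert_zero_insert hS.2 (h ▸ mem_insert_of_mem (mem_insert_self m' S')))
  obtain rfl : S = S' := Finset.ext fun x ↦ by
    rw [mem_iff_mem_insert_zero_insert hS.2, mem_iff_mem_insert_zero_insert hS'.2, h]
  rfl

end Finset

namespace Finpartition

variable {n m : ℕ} {S : Finset ℕ} {P : Finpartition (range (n + 1))}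

theorem subset_or_subset_of_part_zero_eq (hP : P.NonOverlapping) (hS : S ⊆ Ioo 0 m)
    (h0 : P.part 0 = insert 0 (insert m S)) {B : Finset ℕ} (hB : B ∈ P.parts)
    (hB0 : B ≠ P.part 0) : B ⊆ Ioo 0 m \ S ∨ B ⊆ Ioo m (n + 1) := by
  have hA : P.part 0 ∈ P.parts := P.part_mem.2 (by simp)
  have hdisj : Disjoint (P.part 0) B := P.disjoint hA hB hB0.symm
  rw [h0] at hA hdisj
  rcases hP.between_or_above hA hB (h0 ▸ hB0.symm) (mem_insert_self 0 _)
    (mem_insert_of_mem (mem_insert_self m S)) (fun x ↦ le_of_mem_insert_zero_insert hS)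
    (fun x _ ↦ Nat.zero_le x) with h | h
  · refine Or.inl fun x hx ↦ mem_sdiff.2 ⟨mem_Ioo.2 (h x hx), fun hxS ↦ ?_⟩
    exact disjoint_right.1 hdisj hx (mem_insert_of_mem (mem_insert_of_mem hxS))
  · exact Or.inr fun x hx ↦ mem_Ioo.2 ⟨h x hx, mem_range.1 (P.subset hB hx)⟩

theorem part_subset_Ioo_sdiff (hP : P.NonOverlapping) (hS : S ⊆ Ioo 0 m)
    (h0 : P.part 0 = insert 0 (insert m S)) {x : ℕ} (hx : x ∈ Ioo 0 m \ S) :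
    P.part x ⊆ Ioo 0 m \ S := by
  obtain ⟨⟨hx0, hxm⟩, hxS⟩ : (0 < x ∧ x < m) ∧ x ∉ S := by simpa using hx
  have hmn : m < n + 1 := mem_range.1 (P.part_subset 0 (h0 ▸ by simp))
  have hxs : x ∈ range (n + 1) := mem_range.2 (by omega)
  have hxx := P.mem_part_self.2 hxs
  have hx0' : P.part x ≠ P.part 0 := fun h ↦ by
    rw [h, h0] at hxx
    simp only [mem_insert] at hxx
    exact hxx.elim (by omega) (·.elim (by omega) hxS)
  rcases subset_or_subset_of_part_zero_eq hP hS h0 (P.part_mem.2 hxs) hx0' with h | h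
  · exact h
  · exact absurd (mem_Ioo.1 (h hxx)).1 (by omega)

theorem part_subset_Ioo (hP : P.NonOverlapping) (hS : S ⊆ Ioo 0 m)
    (h0 : P.part 0 = insert 0 (insert m S)) {x : ℕ} (hx : x ∈ Ioo m (n + 1)) :
    P.part x ⊆ Ioo m (n + 1) := by
  obtain ⟨hmx, hxn⟩ := mem_Ioo.1 hx
  have hxs : x ∈ range (n + 1) := mem_range.2 hxn
  have hxx := P.mem_part_self.2 hxs
  have hx0' : P.part x ≠ P.part 0 := fun h ↦ by
    rw [h, h0] at hxx
    have := le_of_mem_insert_zero_insert hS hxx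
    omega
  rcases subset_or_subset_of_part_zero_eq hP hS h0 (P.part_mem.2 hxs) hx0' with h | h
  · exact absurd (mem_Ioo.1 (mem_sdiff.1 (h hxx)).1).2 (by omega)
  · exact h

theorem insert_part_zero_filter_union_filter (hP : P.NonOverlapping) (hS : S ⊆ Ioo 0 m)
    (h0 : P.part 0 = insert 0 (insert m S)) :
    insert (insert 0 (insert m S))
      ({B ∈ P.parts | B ⊆ Ioo 0 m \ S} ∪ {B ∈ P.parts | B ⊆ Ioo m (n + 1)}) = P.parts := by
  ext B
  simp only [mem_insert, mem_union, mem_filter]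
  constructor
  · rintro (rfl | ⟨hB, -⟩ | ⟨hB, -⟩)
    exacts [h0 ▸ P.part_mem.2 (by simp), hB, hB]
  · intro hB
    by_cases hB0 : B = P.part 0
    · exact Or.inl (hB0.trans h0)
    · rcases subset_or_subset_of_part_zero_eq hP hS h0 hB hB0 with h | h
      exacts [Or.inr (Or.inl ⟨hB, h⟩), Or.inr (Or.inr ⟨hB, h⟩)]

section ZeroBlock

variable (hmn : m ≤ n) (hS : S ⊆ Ioo 0 m)
  {Q : Finpartition (Ioo 0 m \ S)} {R : Finpartition (Ioo m (n + 1))}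

noncomputable def glueZeroBlock (Q : Finpartition (Ioo 0 m \ S))
    (R : Finpartition (Ioo m (n + 1))) : Finpartition (range (n + 1)) :=
  (Q.disjUnion R disjoint_Ioo_sdiff_Ioo).extend (by simp)
    (disjoint_Ioo_sdiff_union_Ioo_insert_zero_insert hS)
    (Ioo_sdiff_union_Ioo_sup_insert_zero_insert hmn hS)

theorem glueZeroBlock_parts :
    (glueZeroBlock hmn hS Q R).parts = insert (insert 0 (insert m S)) (Q.parts ∪ R.parts) :=
  rfl

theorem NonOverlapping.glueZeroBlock (hQ : Q.NonOverlapping) (hR : R.NonOverlapping) :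
    (glueZeroBlock hmn hS Q R).NonOverlapping := by
  refine (hQ.disjUnion hR (fun A hA B hB ↦ not_overlap_of_forall_lt fun x hx y hy ↦ ?_) _).extend
    _ _ _ fun C hC ↦ ?_
  · exact (mem_Ioo.1 (mem_sdiff.1 (Q.subset hA hx)).1).2.trans (mem_Ioo.1 (R.subset hB hy)).1
  rcases mem_union.1 hC with hC | hC
  · exact not_overlap_of_forall_mem_Icc (mem_insert_self 0 _)
      (mem_insert_of_mem (mem_insert_self m S))
      fun x hx ↦ ⟨Nat.zero_le x, (mem_Ioo.1 (mem_sdiff.1 (Q.subset hC hx)).1).2.le⟩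
  · exact not_overlap_of_forall_lt fun x hx y hy ↦
      (le_of_mem_insert_zero_insert hS hx).trans_lt (mem_Ioo.1 (R.subset hC hy)).1

theorem NoSingletons.glueZeroBlock (hm : 0 < m) (hQ : Q.NoSingletons) (hR : R.NoSingletons) :
    (glueZeroBlock hmn hS Q R).NoSingletons := by
  intro B hB
  rcases mem_insert.1 hB with rfl | hB
  · exact one_lt_card.2 ⟨0, mem_insert_self _ _, m, mem_insert_of_mem (mem_insert_self _ _),
      hm.ne⟩
  rcases mem_union.1 hB with hB | hB
  exacts [hQ B hB, hR B hB]

theorem part_zero_glueZeroBlock : (glueZeroBlock hmn hS Q R).part 0 = insert 0 (insert m S) :=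
  part_eq_of_mem _ (mem_insert_self _ _) (mem_insert_self _ _)

theorem filter_subset_Ioo_sdiff_glueZeroBlock_parts :
    {B ∈ (glueZeroBlock hmn hS Q R).parts | B ⊆ Ioo 0 m \ S} = Q.parts := by
  ext B
  rw [mem_filter, glueZeroBlock_parts, mem_insert, mem_union]
  refine ⟨?_, fun hB ↦ ⟨Or.inr (Or.inl hB), Q.subset hB⟩⟩
  rintro ⟨rfl | hB | hB, hBI⟩
  · simpa using hBI (mem_insert_self 0 _)
  · exact hB
  · obtain ⟨x, hx⟩ := R.nonempty_of_mem_parts hB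
    exact absurd (R.subset hB hx) (disjoint_left.1 disjoint_Ioo_sdiff_Ioo (hBI hx))

theorem filter_subset_Ioo_glueZeroBlock_parts :
    {B ∈ (glueZeroBlock hmn hS Q R).parts | B ⊆ Ioo m (n + 1)} = R.parts := by
  ext B
  rw [mem_filter, glueZeroBlock_parts, mem_insert, mem_union]
  refine ⟨?_, fun hB ↦ ⟨Or.inr (Or.inr hB), R.subset hB⟩⟩
  rintro ⟨rfl | hB | hB, hBJ⟩
  · simpa using hBJ (mem_insert_self 0 _)
  · obtain ⟨x, hx⟩ := Q.nonempty_of_mem_parts hB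
    exact absurd (hBJ hx) (disjoint_left.1 disjoint_Ioo_sdiff_Ioo (Q.subset hB hx))
  · exact hB

end ZeroBlock

noncomputable def equivOfPartZeroEq (hm : 0 < m) (hmn : m ≤ n) (hS : S ⊆ Ioo 0 m) :
    {P : Finpartition (range (n + 1)) //
        (P.NonOverlapping ∧ P.NoSingletons) ∧ P.part 0 = insert 0 (insert m S)} ≃
      {Q : Finpartition (Ioo 0 m \ S) // Q.NonOverlapping ∧ Q.NoSingletons} ×
        {R : Finpartition (Ioo m (n + 1)) // R.NonOverlapping ∧ R.NoSingletons} where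
  toFun P :=
    (⟨P.1.restrictSaturated (Ioo_sdiff_subset_range hmn)
        fun _ ↦ part_subset_Ioo_sdiff P.2.1.1 hS P.2.2,
        P.2.1.1.of_parts_subset (filter_subset _ _), fun B hB ↦ P.2.1.2 B (mem_filter.1 hB).1⟩,
      ⟨P.1.restrictSaturated Ioo_subset_range fun _ ↦ part_subset_Ioo P.2.1.1 hS P.2.2,
        P.2.1.1.of_parts_subset (filter_subset _ _), fun B hB ↦ P.2.1.2 B (mem_filter.1 hB).1⟩)
  invFun QR := ⟨glueZeroBlock hmn hS QR.1.1 QR.2.1,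
    ⟨QR.1.2.1.glueZeroBlock hmn hS QR.2.2.1, QR.1.2.2.glueZeroBlock hmn hS hm QR.2.2.2⟩,
    part_zero_glueZeroBlock hmn hS⟩
  left_inv P := Subtype.ext <| Finpartition.ext <|
    insert_part_zero_filter_union_filter P.2.1.1 hS P.2.2
  right_inv _ := Prod.ext
    (Subtype.ext <| Finpartition.ext <| filter_subset_Ioo_sdiff_glueZeroBlock_parts hmn hS)
    (Subtype.ext <| Finpartition.ext <| filter_subset_Ioo_glueZeroBlock_parts hmn hS)

theorem sum_card_part_zero_eq (hm : m ∈ Icc 1 n) :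
    ∑ S ∈ (Ioo 0 m).powerset, Nat.card {P : Finpartition (range (n + 1)) //
        (P.NonOverlapping ∧ P.NoSingletons) ∧ P.part 0 = insert 0 (insert m S)} =
      besselB (m - 1) * besselBt (n - m) := by
  rw [← show #(Ioo 0 m) = m - 1 by simp, besselB_eq_sum_powerset, sum_mul]
  refine sum_congr rfl fun S hS ↦ ?_
  rw [Nat.card_congr (equivOfPartZeroEq (mem_Icc.1 hm).1 (mem_Icc.1 hm).2 (mem_powerset.1 hS)),
    Nat.card_prod, card_nonOverlapping_noSingletons, card_nonOverlapping_noSingletons,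
    Nat.card_Ioo]
  congr 2
  omega

end Finpartition

theorem besselBt_succ_eq_sum_Icc (n : ℕ) :
    besselBt (n + 1) = ∑ m ∈ Icc 1 n, besselB (m - 1) * besselBt (n - m) := by
  have hmem : ∀ P : Finpartition (range (n + 1)), P.NonOverlapping ∧ P.NoSingletons →
      P.part 0 ∈ ((Icc 1 n).sigma fun m ↦ (Ioo 0 m).powerset).image
        fun x ↦ insert 0 (insert x.1 x.2) := fun P hP ↦
    have h0 : 0 ∈ range (n + 1) := by simp
    mem_image.2 (exists_eq_insert_zero_insert (P.part_subset 0) (P.mem_part_self.2 h0)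
      (hP.2 _ (P.part_mem.2 h0)))
  rw [← card_range (n + 1), ← card_nonOverlapping_noSingletons,
    Nat.card_subtype_eq_sum_card_fiberwise hmem, sum_image injOn_insert_zero_insert, sum_sigma]
  exact sum_congr rfl fun m hm ↦ sum_card_part_zero_eq hm

theorem besselBt_succ (n : ℕ) :
    besselBt (n + 1) = ∑ j ∈ range n, besselBt j * besselB (n - 1 - j) := by
  rw [besselBt_succ_eq_sum_Icc]
  refine sum_nbij' (fun m ↦ n - m) (fun j ↦ n - j) ?_ ?_ ?_ ?_ fun m hm ↦ ?_ <;>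
    simp only [mem_Icc, mem_range] at *
  iterate 4 omega
  rw [mul_comm, show n - 1 - (n - m) = m - 1 by omega]

/-- For all `n ≥ 0`: `B*_n = Σ_{j=0}^{n} C(n,j)·B̃*_{n−j}` and
`B̃*_{n+1} = Σ_{j=0}^{n−1} B̃*_j·B*_{n−1−j}`. -/
theorem bessel_number_recurrences (n : ℕ) :
    besselB n = (∑ j ∈ Finset.range (n + 1), n.choose j * besselBt (n - j)) ∧
    besselBt (n + 1) = ∑ j ∈ Finset.range n, besselBt j * besselB (n - 1 - j) :=
  ⟨besselB_eq_sum_choose n, besselBt_succ n⟩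
end

section
/- Every set partition π of [n] with n ≥ 1 admits a unique decomposition as a concatenation of atomic partitions: there exist a unique r ≥ 1, unique positive integers m_1,…,m_r with m_1 + … + m_r = n, and unique atomic set partitions π^{(i)} of [m_i] such that π = π^{(1)} | π^{(2)} | … | π^{(r)}. -/
/-!
Call `k` a cut of `π` if some blocks of `π` form a partition of `[k]`; then every block lies
either inside `[k]` or above it, so `π` splits into a partition of `[k]` and, shifted down,
a partition of `[n - k]`. The first atom of any decomposition ends at a cut, and its atomicity
says that there is no smaller positive cut: it is forced to be the part of `π` below the least
positive cut. Strong induction on `n` then gives existence and uniqueness together.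
-/

open Finset

/-- A set partition `π` of `[m] = Finset.range m` is atomic if no subset of its blocks
forms a partition of `[k]` for some `1 ≤ k < m` (equivalently, `π` is not a
concatenation of two nonempty partitions).  Since the blocks are pairwise disjoint and
nonempty, a subset `S` of blocks forms a partition of `[k]` iff its union is
`Finset.range k`. -/
def IsAtomicPartition {m : ℕ} (π : Finpartition (Finset.range m)) : Prop :=
  ¬ ∃ k : ℕ, 0 < k ∧ k < m ∧ ∃ S ⊆ π.parts, S.sup id = Finset.range k

/-- The blocks of the concatenation `π⁽¹⁾ | π⁽²⁾ | … | π⁽ʳ⁾` of a list of partitions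
(of `[m₁], …, [m_r]`), starting at offset `o`: the blocks of the `i`-th partition are
shifted by `o + m₁ + … + m_{i-1}`. -/
def concatParts : ℕ → List ((m : ℕ) × Finpartition (Finset.range m)) → Finset (Finset ℕ)
  | _, [] => ∅
  | o, ⟨m, ρ⟩ :: L => ρ.parts.image (fun β => β.image (· + o)) ∪ concatParts (o + m) L

def IsCut {n : ℕ} (π : Finpartition (range n)) (k : ℕ) : Prop :=
  ∃ S ⊆ π.parts, S.sup id = range k

lemma isAtomicPartition_iff {m : ℕ} (π : Finpartition (range m)) :
    IsAtomicPartition π ↔ ∀ k, 0 < k → k < m → ¬ IsCut π k := by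
  simp [IsAtomicPartition, IsCut]

namespace IsCut

variable {n k : ℕ} {π : Finpartition (range n)}

lemma top (π : Finpartition (range n)) : IsCut π n := ⟨π.parts, subset_rfl, π.sup_parts⟩

lemma le (h : IsCut π k) : k ≤ n := by
  obtain ⟨S, hS, hsup⟩ := h
  have : range k ⊆ range n := hsup ▸ sup_mono hS |>.trans_eq π.sup_parts
  simpa using this

lemma subset_or_le (h : IsCut π k) {b : Finset ℕ} (hb : b ∈ π.parts) :
    b ⊆ range k ∨ ∀ x ∈ b, k ≤ x := by
  by_contra! ⟨hbk, x, hxb, hxk⟩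
  obtain ⟨S, hS, hsup⟩ := h
  obtain ⟨a, haS, hxa⟩ := mem_sup.1 (hsup ▸ mem_range.2 hxk : x ∈ S.sup id)
  obtain rfl := π.eq_of_mem_parts (hS haS) hb hxa hxb
  exact hbk (hsup ▸ le_sup (f := id) haS)

lemma sup_filter_subset (h : IsCut π k) :
    (π.parts.filter (· ⊆ range k)).sup id = range k := by
  refine le_antisymm (Finset.sup_le fun b hb => (mem_filter.1 hb).2) ?_
  obtain ⟨S, hS, hsup⟩ := h
  exact hsup ▸ sup_mono fun a ha => mem_filter.2 ⟨hS ha, hsup ▸ le_sup (f := id) ha⟩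

end IsCut

section Split

variable {n k : ℕ} (π : Finpartition (range n))

def lowerPart (h : IsCut π k) : Finpartition (range k) :=
  π.ofSubset (filter_subset _ _) h.sup_filter_subset

noncomputable def upperPart (h : IsCut π k) : Finpartition (range (n - k)) :=
  .ofExistsUnique ((π.parts.filter (¬ · ⊆ range k)).image
      fun b => b.preimage (· + k) (add_left_injective k).injOn)
    (by
      simp only [mem_image, mem_filter, forall_exists_index, and_imp]
      rintro _ b hb - rfl x hx
      have := mem_range.1 (π.subset hb (mem_preimage.1 hx))
      exact mem_range.2 (by omega))
    (by
      intro x hx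
      obtain ⟨b, ⟨hb, hxb⟩, hunique⟩ :=
        π.existsUnique_mem (mem_range.2 (by simp at hx; omega) : x + k ∈ range n)
      refine ⟨_, ⟨mem_image_of_mem _ (mem_filter.2 ⟨hb, fun hbk => ?_⟩),
        mem_preimage.2 hxb⟩, ?_⟩
      · simpa using hbk hxb
      · simp only [mem_image, mem_filter]
        rintro _ ⟨⟨b', ⟨hb', -⟩, rfl⟩, hxb'⟩
        rw [hunique b' ⟨hb', by simpa using hxb'⟩])
    (by
      simp only [mem_image, mem_filter, not_exists, not_and]
      intro b ⟨hb, hbk⟩ hempty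
      obtain ⟨x, hx⟩ := π.nonempty_of_mem_parts hb
      have hkx := (h.subset_or_le hb).resolve_left hbk x hx
      have : x - k ∈ b.preimage (· + k) (add_left_injective k).injOn :=
        mem_preimage.2 (by rwa [Nat.sub_add_cancel hkx])
      simp [hempty] at this)

lemma lowerPart_parts (h : IsCut π k) : (lowerPart π h).parts = π.parts.filter (· ⊆ range k) := rfl

lemma image_upperPart_parts (h : IsCut π k) :
    (upperPart π h).parts.image (image (· + k)) = π.parts.filter (¬ · ⊆ range k) := by
  classical
  rw [upperPart, Finpartition.ofExistsUnique_parts, image_image]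
  refine (image_congr fun b hb => ?_).trans image_id
  obtain ⟨hb, hbk⟩ := mem_filter.1 hb
  have hkb := (h.subset_or_le hb).resolve_left hbk
  rw [Function.comp_apply, image_preimage, filter_true_of_mem, id]
  exact fun x hx => ⟨x - k, Nat.sub_add_cancel (hkb x hx)⟩

end Split

lemma concatParts_add (o a : ℕ) (L : List ((m : ℕ) × Finpartition (range m))) :
    concatParts (o + a) L = (concatParts a L).image (image (· + o)) := by
  induction L generalizing a with
  | nil => rfl
  | cons p L ih =>
    obtain ⟨m, ρ⟩ := p
    simp only [concatParts, image_union, image_image, add_assoc, ih (a + m)]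
    congr 1
    refine image_congr fun β _ => ?_
    simp only [Function.comp_apply, image_image]
    exact image_congr fun x _ => by simp only [Function.comp_apply]; omega

lemma concatParts_zero_cons {m : ℕ} (ρ : Finpartition (range m))
    (L : List ((m : ℕ) × Finpartition (range m))) :
    concatParts 0 (⟨m, ρ⟩ :: L) = ρ.parts ∪ (concatParts 0 L).image (image (· + m)) := by
  simp [concatParts, ← concatParts_add m 0]

lemma filter_union_of_forall {α : Type*} [DecidableEq α] (p : α → Prop) [DecidablePred p]
    {s t : Finset α} (hs : ∀ a ∈ s, p a) (ht : ∀ a ∈ t, ¬ p a) :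
    (s ∪ t).filter p = s ∧ (s ∪ t).filter (¬ p ·) = t := by
  rw [filter_union, filter_union, filter_true_of_mem hs, filter_false_of_mem ht,
    filter_false_of_mem fun a ha => not_not.2 (hs a ha), filter_true_of_mem ht]
  exact ⟨union_empty s, empty_union t⟩

theorem concatParts_zero_cons_eq_iff {n m : ℕ} (π : Finpartition (range n))
    (ρ : Finpartition (range m)) (L : List ((m : ℕ) × Finpartition (range m))) :
    concatParts 0 (⟨m, ρ⟩ :: L) = π.parts ↔
      ∃ h : IsCut π m, ρ = lowerPart π h ∧ concatParts 0 L = (upperPart π h).parts := by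
  rw [concatParts_zero_cons]
  constructor
  · intro hU
    have h : IsCut π m := ⟨ρ.parts, hU ▸ subset_union_left, ρ.sup_parts⟩
    have hsplit := filter_union_of_forall (· ⊆ range m) (fun b hb => ρ.subset hb)
      (t := (concatParts 0 L).image (image (· + m))) fun b hb hbm => by
        obtain ⟨x, hx⟩ := π.nonempty_of_mem_parts (hU ▸ mem_union_right _ hb)
        obtain ⟨β, -, rfl⟩ := mem_image.1 hb
        obtain ⟨y, -, rfl⟩ := mem_image.1 hx
        simpa using hbm hx
    rw [hU, ← image_upperPart_parts π h] at hsplit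
    exact ⟨h, Finpartition.ext hsplit.1.symm,
      image_injective (image_injective (add_left_injective m)) hsplit.2.symm⟩
  · rintro ⟨h, rfl, hL⟩
    rw [hL, image_upperPart_parts, lowerPart_parts, filter_union_filter_not_eq]

lemma isCut_lowerPart_iff {n k j : ℕ} {π : Finpartition (range n)} (h : IsCut π k)
    (hjk : j ≤ k) : IsCut (lowerPart π h) j ↔ IsCut π j := by
  refine ⟨fun ⟨S, hS, hsup⟩ => ⟨S, hS.trans (filter_subset _ _), hsup⟩, fun hj => ?_⟩
  refine ⟨_, fun b hb => ?_, hj.sup_filter_subset⟩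
  obtain ⟨hb, hbj⟩ := mem_filter.1 hb
  exact mem_filter.2 ⟨hb, hbj.trans (range_subset_range.2 hjk)⟩

lemma isAtomicPartition_lowerPart_iff {n k : ℕ} {π : Finpartition (range n)} (h : IsCut π k) :
    IsAtomicPartition (lowerPart π h) ↔ ∀ j, 0 < j → j < k → ¬ IsCut π j := by
  rw [isAtomicPartition_iff]
  exact forall₂_congr fun j _ => imp_congr_right fun hjk =>
    not_congr (isCut_lowerPart_iff h hjk.le)

/-- `L = []` is allowed here: it decomposes the empty partition of `[0]`, the base case of the
induction. -/
def IsAtomicDecomposition {n : ℕ} (π : Finpartition (range n))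
    (L : List ((m : ℕ) × Finpartition (range m))) : Prop :=
  (∀ p ∈ L, 0 < p.1 ∧ IsAtomicPartition p.2) ∧ (L.map fun p => p.1).sum = n ∧
    concatParts 0 L = π.parts

theorem isAtomicDecomposition_iff_cons {n k : ℕ} {π : Finpartition (range n)}
    (hk : IsLeast {j | 0 < j ∧ IsCut π j} k) (L : List ((m : ℕ) × Finpartition (range m))) :
    IsAtomicDecomposition π L ↔
      ∃ L', L = ⟨k, lowerPart π hk.1.2⟩ :: L' ∧ IsAtomicDecomposition (upperPart π hk.1.2) L' := by
  obtain ⟨⟨hk0, hkcut⟩, hkmin⟩ := hk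
  have hkn := hkcut.le
  constructor
  · rintro ⟨hat, hsum, hcc⟩
    cases L with
    | nil => simp at hsum; omega
    | cons p L' =>
      obtain ⟨m, ρ⟩ := p
      obtain ⟨hm, rfl, hcc'⟩ := (concatParts_zero_cons_eq_iff π ρ L').1 hcc
      obtain ⟨hm0, hρ⟩ := hat _ List.mem_cons_self
      have hmk : m = k := le_antisymm
        (not_lt.1 fun hkm => (isAtomicPartition_lowerPart_iff hm).1 hρ k hk0 hkm hkcut)
        (hkmin ⟨hm0, hm⟩)
      subst hmk
      refine ⟨L', rfl, fun p hp => hat p (List.mem_cons_of_mem _ hp), ?_, hcc'⟩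
      simp only [List.map_cons, List.sum_cons] at hsum
      omega
  · rintro ⟨L', rfl, hat, hsum, hcc⟩
    refine ⟨?_, by simp [hsum]; omega, (concatParts_zero_cons_eq_iff π _ L').2 ⟨hkcut, rfl, hcc⟩⟩
    rintro p (_ | ⟨_, hp⟩)
    · exact ⟨hk0, (isAtomicPartition_lowerPart_iff hkcut).2 fun j hj0 hjk hj =>
        (hkmin ⟨hj0, hj⟩).not_gt hjk⟩
    · exact hat p hp

theorem existsUnique_isAtomicDecomposition (n : ℕ) (π : Finpartition (range n)) :
    ∃! L, IsAtomicDecomposition π L := by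
  induction n using Nat.strong_induction_on with
  | _ n ih =>
  rcases Nat.eq_zero_or_pos n with rfl | hn
  · refine ⟨[], ⟨by simp, rfl, ?_⟩, fun L ⟨hat, hsum, _⟩ => ?_⟩
    · exact (π.parts_eq_empty_iff.2 range_zero).symm
    · cases L with
      | nil => rfl
      | cons p L =>
        simp only [List.map_cons, List.sum_cons] at hsum
        have := (hat p List.mem_cons_self).1
        omega
  · have hk : IsLeast {j | 0 < j ∧ IsCut π j} _ := isLeast_csInf ⟨n, hn, IsCut.top π⟩
    obtain ⟨L₀, hL₀, huniq⟩ := ih _ (Nat.sub_lt hn hk.1.1) (upperPart π hk.1.2)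
    refine ⟨_, (isAtomicDecomposition_iff_cons hk _).2 ⟨L₀, rfl, hL₀⟩, fun L hL => ?_⟩
    obtain ⟨L', rfl, hL'⟩ := (isAtomicDecomposition_iff_cons hk L).1 hL
    rw [huniq L' hL']

/-- Every set partition `π` of `[n]`, `n ≥ 1`, admits a unique decomposition as a
concatenation of atomic partitions: there is a unique nonempty list
`L = [⟨m₁, π⁽¹⁾⟩, …, ⟨m_r, π⁽ʳ⁾⟩]` with each `m_i ≥ 1`, each `π⁽ⁱ⁾` an atomic
partition of `[m_i]`, `m₁ + … + m_r = n`, and `π = π⁽¹⁾ | π⁽²⁾ | … | π⁽ʳ⁾`. -/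
theorem unique_atomic_decomposition (n : ℕ) (hn : 1 ≤ n)
    (π : Finpartition (Finset.range n)) :
    ∃! L : List ((m : ℕ) × Finpartition (Finset.range m)),
      L ≠ [] ∧ (∀ p ∈ L, 0 < p.1 ∧ IsAtomicPartition p.2) ∧
        (L.map fun p => p.1).sum = n ∧ concatParts 0 L = π.parts := by
  obtain ⟨L, hL, huniq⟩ := existsUnique_isAtomicDecomposition n π
  refine ⟨L, ⟨?_, hL⟩, fun L' hL' => huniq L' hL'.2⟩
  rintro rfl
  exact absurd hL.2.1.symm (Nat.one_le_iff_ne_zero.1 hn)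
end

section
/- Let (R, D) be a commutative ring with a derivation D and let u ∈ R. Define f_0 = u, f_{n+1} = D(f_n) + Σ_{s=0}^{n−1} f_s·f_{n−1−s}, and define g_0 = u and, for n ≥ 1, g_{2n} = f_{2n} + 2·Σ_{s=0}^{n−1} g_{2s}·f_{2n−2−2s}. Then for every n ≥ 0: D(g_{2n+2}) = D^3(g_{2n}) + 4u·D(g_{2n}) + 2·D(u)·g_{2n}. -/
/-!
With `Y = z⁻²`, form the series `A = Σ f_{2n} Yⁿ`, `B = Σ f_{2n+1} Yⁿ`, `Γ = Σ g_{2n} Yⁿ` over `R`,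
with `D` acting coefficientwise as `δ`. The Riccati recursion splits into its even and odd parts
`δA = B - 2YAB` and `YδB = A - u - YA² - Y²B²`, and the recursion for `g` says `Γ (1 - 2YA) = A`,
so `H = 1 + 2YΓ` (the generating function `g` itself) is the inverse of `1 - 2YA`. Differentiating
gives `δΓ = BH` and `Yδ²Γ = H (A - u - YA² + Y²B²)`; one more derivative yields
`δΓ = δu + Y (δ³Γ + 4uδΓ + 2δu Γ)`, whose coefficient of `Yⁿ⁺¹` is the KdV recursion.
-/

open Finset

theorem Finset.sum_range_two_mul {M : Type*} [AddCommMonoid M] (h : ℕ → M) (n : ℕ) :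
    ∑ s ∈ range (2 * n), h s = ∑ i ∈ range n, h (2 * i) + ∑ i ∈ range n, h (2 * i + 1) := by
  induction n with
  | zero => simp
  | succ n ih =>
    rw [show 2 * (n + 1) = 2 * n + 1 + 1 by ring, sum_range_succ, sum_range_succ, ih,
      sum_range_succ, sum_range_succ]
    abel

theorem Finset.sum_range_two_mul_add_one {M : Type*} [AddCommMonoid M] (h : ℕ → M) (n : ℕ) :
    ∑ s ∈ range (2 * n + 1), h s =
      ∑ i ∈ range (n + 1), h (2 * i) + ∑ i ∈ range n, h (2 * i + 1) := by
  rw [sum_range_succ, sum_range_two_mul, sum_range_succ (fun i => h (2 * i))]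
  abel

theorem Derivation.map_ofNat_eq_zero {R A M : Type*} [CommSemiring R] [CommSemiring A]
    [Algebra R A] [AddCommMonoid M] [Module A M] [Module R M] (D : Derivation R A M)
    (n : ℕ) [n.AtLeastTwo] : D (OfNat.ofNat n : A) = 0 :=
  D.map_natCast n

section DifferentialRing

variable {k S : Type*} [CommSemiring k] [CommRing S] [Algebra k S] (δ : Derivation k S S)
  {Y U A B Γ : S}

theorem Derivation.kdv_identity_of_riccati (hY : δ Y = 0) (hA : δ A = B - 2 * (Y * (A * B)))
    (hB : Y * δ B = A - U - Y * (A * A) - Y * (Y * (B * B))) (hΓ : Γ = A + 2 * (Y * (Γ * A))) :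
    δ Γ = δ U + Y * (δ (δ (δ Γ)) + 4 * (U * δ Γ) + 2 * (δ U * Γ)) := by
  set H := 1 + 2 * Y * Γ with hH_def
  have hH : H * (1 - 2 * Y * A) = 1 := by linear_combination (2 * Y) * hΓ
  have hδΓ : δ Γ = B * H := by
    have e := congrArg δ hΓ
    simp only [map_add, Derivation.leibniz, smul_eq_mul, hY, δ.map_ofNat_eq_zero] at e
    linear_combination H * e + H ^ 2 * hA - (δ Γ - B * H) * hH
  have hδH : δ H = 2 * Y * (B * H) := by
    simp only [hH_def, map_add, Derivation.leibniz, smul_eq_mul, hY, δ.map_ofNat_eq_zero,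
      Derivation.map_one_eq_zero, hδΓ]
    ring
  have hδδΓ : Y * δ (δ Γ) = H * (A - U - Y * A ^ 2 + Y ^ 2 * B ^ 2) := by
    have e := congrArg δ hδΓ
    simp only [Derivation.leibniz, smul_eq_mul] at e
    linear_combination Y * e + Y * B * hδH + H * hB
  have e := congrArg δ hδδΓ
  simp only [map_add, map_sub, Derivation.leibniz, Derivation.leibniz_pow, smul_eq_mul, hY,
    nsmul_eq_mul, hδH] at e
  rw [hA] at e
  linear_combination -e + (1 - 4 * Y * U) * hδΓ - 2 * Y * B * H * hB - δ U * hH_def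

end DifferentialRing

namespace PowerSeries

variable {R : Type*} [CommRing R]

noncomputable def mapDerivation (D : Derivation ℤ R R) : Derivation ℤ R⟦X⟧ R⟦X⟧ :=
  Derivation.mk'
    { toFun := fun φ => mk fun n => D (coeff n φ)
      map_add' := fun φ ψ => by ext n; simp
      map_smul' := fun k φ => by
        ext n
        rw [coeff_mk, RingHom.id_apply, LinearMap.map_smul_of_tower, map_zsmul,
          LinearMap.map_smul_of_tower, coeff_mk] }
    fun φ ψ => by
      rw [smul_eq_mul, smul_eq_mul, mul_comm ψ]
      ext n
      simp only [LinearMap.coe_mk, AddHom.coe_mk, coeff_mk, coeff_mul, map_sum, map_add,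
        Derivation.leibniz, smul_eq_mul, ← sum_add_distrib]
      exact sum_congr rfl fun _ _ => by ring

variable (D : Derivation ℤ R R)

@[simp]
theorem coeff_mapDerivation (n : ℕ) (φ : R⟦X⟧) :
    coeff n (mapDerivation D φ) = D (coeff n φ) :=
  coeff_mk n fun n => D (coeff n φ)

theorem mapDerivation_X : mapDerivation D X = 0 := by
  ext n; simp [coeff_X, apply_ite D]

theorem mapDerivation_C (r : R) : mapDerivation D (C r) = C (D r) := by
  ext n; simp [coeff_C, apply_ite D]

theorem coeff_ofNat_mul (n k : ℕ) [k.AtLeastTwo] (φ : R⟦X⟧) :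
    coeff n ((no_index (OfNat.ofNat k) : R⟦X⟧) * φ) = OfNat.ofNat k * coeff n φ := by
  rw [← map_ofNat C k, coeff_C_mul]

theorem coeff_X_mul_mul (n : ℕ) (φ ψ : R⟦X⟧) :
    coeff n (X * (φ * ψ)) = ∑ i ∈ range n, coeff i φ * coeff (n - 1 - i) ψ := by
  cases n with
  | zero => simp
  | succ n =>
    rw [coeff_succ_X_mul, coeff_mul, Nat.sum_antidiagonal_eq_sum_range_succ_mk]
    simp

section Riccati

variable {u : R} {f g : ℕ → R}

theorem mk_even_eq_add_two_mul_X_mul (hf0 : f 0 = u) (hg0 : g 0 = u)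
    (hg : ∀ n : ℕ, 1 ≤ n →
      g (2 * n) = f (2 * n) + 2 * ∑ s ∈ Finset.range n, g (2 * s) * f (2 * n - 2 - 2 * s)) :
    mk (fun n => g (2 * n)) =
      mk (fun n => f (2 * n)) + 2 * (X * (mk (fun n => g (2 * n)) * mk (fun n => f (2 * n)))) := by
  ext n
  simp only [map_add, coeff_mk, coeff_ofNat_mul, coeff_X_mul_mul]
  cases n with
  | zero => simp [hf0, hg0]
  | succ n =>
    rw [hg (n + 1) n.succ_pos]
    congr 2
    refine sum_congr rfl fun s hs => ?_
    rw [mem_range] at hs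
    congr 2
    omega

theorem mapDerivation_mk_even_eq_of_riccati
    (hf : ∀ n : ℕ, f (n + 1) = D (f n) + ∑ s ∈ Finset.range n, f s * f (n - 1 - s)) :
    mapDerivation D (mk fun n => f (2 * n)) =
      mk (fun n => f (2 * n + 1)) -
        2 * (X * (mk (fun n => f (2 * n)) * mk (fun n => f (2 * n + 1)))) := by
  ext n
  simp only [coeff_mapDerivation, coeff_mk, map_sub, coeff_ofNat_mul, coeff_X_mul_mul]
  set T := ∑ i ∈ range n, f (2 * i) * f (2 * (n - 1 - i) + 1)
  have h_even : ∑ i ∈ range n, f (2 * i) * f (2 * n - 1 - 2 * i) = T :=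
    sum_congr rfl fun i hi => by rw [mem_range] at hi; congr 2; omega
  have h_odd : ∑ i ∈ range n, f (2 * i + 1) * f (2 * n - 1 - (2 * i + 1)) = T := by
    rw [← sum_range_reflect]
    refine sum_congr rfl fun i hi => ?_
    rw [mem_range] at hi
    rw [mul_comm]
    congr 2
    omega
  rw [hf, sum_range_two_mul, h_even, h_odd]
  ring

theorem X_mul_mapDerivation_mk_odd_eq_of_riccati (hf0 : f 0 = u)
    (hf : ∀ n : ℕ, f (n + 1) = D (f n) + ∑ s ∈ Finset.range n, f s * f (n - 1 - s)) :
    X * mapDerivation D (mk fun n => f (2 * n + 1)) =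
      mk (fun n => f (2 * n)) - C u -
        X * (mk (fun n => f (2 * n)) * mk (fun n => f (2 * n))) -
        X * (X * (mk (fun n => f (2 * n + 1)) * mk (fun n => f (2 * n + 1)))) := by
  ext n
  cases n with
  | zero => simp [hf0]
  | succ n =>
    simp only [map_sub, coeff_succ_X_mul, coeff_C, n.succ_ne_zero, if_false]
    rw [coeff_X_mul_mul, coeff_mul, Nat.sum_antidiagonal_eq_sum_range_succ_mk]
    simp only [coeff_mapDerivation, coeff_mk, Nat.succ_eq_add_one]
    rw [show 2 * (n + 1) = 2 * n + 1 + 1 by ring, hf (2 * n + 1),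
      sum_range_two_mul_add_one]
    have h_even : ∑ i ∈ range (n + 1), f (2 * i) * f (2 * n + 1 - 1 - 2 * i) =
        ∑ i ∈ range (n + 1), f (2 * i) * f (2 * (n - i)) :=
      sum_congr rfl fun i hi => by rw [mem_range] at hi; congr 2; omega
    have h_odd : ∑ i ∈ range n, f (2 * i + 1) * f (2 * n + 1 - 1 - (2 * i + 1)) =
        ∑ i ∈ range n, f (2 * i + 1) * f (2 * (n - 1 - i) + 1) :=
      sum_congr rfl fun i hi => by rw [mem_range] at hi; congr 2; omega
    rw [h_even, h_odd]
    ring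

end Riccati

end PowerSeries

open PowerSeries in
/-- Let `(R, D)` be a commutative ring with a derivation `D` and `u ∈ R`.  Define
`f_0 = u`, `f_{n+1} = D(f_n) + Σ_{s=0}^{n−1} f_s·f_{n−1−s}` (the coefficients of the
formal solution of the Riccati equation `D(f) + f² = z²/4 − u`), and `g_0 = u`,
`g_{2n} = f_{2n} + 2·Σ_{s=0}^{n−1} g_{2s}·f_{2n−2−2s}` for `n ≥ 1`.  Then the KdV
recursion `D(g_{2n+2}) = D³(g_{2n}) + 4u·D(g_{2n}) + 2·D(u)·g_{2n}` holds for every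
`n ≥ 0`. -/
theorem kdv_recursion (R : Type*) [CommRing R] (D : Derivation ℤ R R) (u : R)
    (f g : ℕ → R)
    (hf0 : f 0 = u)
    (hf : ∀ n : ℕ, f (n + 1) = D (f n) + ∑ s ∈ Finset.range n, f s * f (n - 1 - s))
    (hg0 : g 0 = u)
    (hg : ∀ n : ℕ, 1 ≤ n →
      g (2 * n) = f (2 * n) + 2 * ∑ s ∈ Finset.range n, g (2 * s) * f (2 * n - 2 - 2 * s)) :
    ∀ n : ℕ, D (g (2 * n + 2)) =
      D (D (D (g (2 * n)))) + 4 * u * D (g (2 * n)) + 2 * D u * g (2 * n) := by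
  set Γ : R⟦X⟧ := mk fun n => g (2 * n)
  set δ := mapDerivation D
  have hkdv : δ Γ = δ (C u) + X * (δ (δ (δ Γ)) + 4 * (C u * δ Γ) + 2 * (δ (C u) * Γ)) :=
    δ.kdv_identity_of_riccati (mapDerivation_X D) (mapDerivation_mk_even_eq_of_riccati D hf)
      (X_mul_mapDerivation_mk_odd_eq_of_riccati D hf0 hf) (mk_even_eq_add_two_mul_X_mul hf0 hg0 hg)
  intro n
  have hcoeff := congrArg (coeff (n + 1)) hkdv
  simp only [δ, Γ, map_add, coeff_succ_X_mul, mapDerivation_C, coeff_C, n.succ_ne_zero, if_false,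
    coeff_ofNat_mul, coeff_C_mul, coeff_mapDerivation, coeff_mk] at hcoeff
  rw [show 2 * n + 2 = 2 * (n + 1) by ring]
  linear_combination hcoeff
end
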